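/- arXiv:2110.10984 — 13 statements merged into one kernel-verified Lean document; each statement's English description precedes it below -/
import Mathlib

section
/- Let G = (A ∪ B, E) be a bipartite graph with partial order preferences for agents, and let M be a perfect matching of G. Suppose there exists a function α : A ∪ B → ℤ such that α_a + α_b ≥ wt_M(a,b) for every edge (a,b) ∈ E and Σ_{u ∈ A∪B} α_u = 0. Then M is a popular assignment, i.e., Δ(N,M) ≤ 0 for every perfect matching N of G. -/
open Finset

/-- A perfect matching (assignment) in the bipartite graph with edge relation `E`:
a bijection `M : A → B` using only edges of `E`. -/
def IsPM {A B : Type*} (E : A → B → Prop) (M : A → B) : Prop :=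
  Function.Bijective M ∧ ∀ a, E a (M a)

/-- `Δ(N, M)`: number of agents preferring `N` minus number preferring `M`. -/
noncomputable def Delta {A B : Type*} [Fintype A] (pref : A → B → B → Prop)
    (N M : A → B) : ℤ :=
  letI := Classical.propDecidable
  ((univ.filter fun a => pref a (N a) (M a)).card : ℤ) -
    ((univ.filter fun a => pref a (M a) (N a)).card : ℤ)

/-- `wt_M(a,b)`: `1` if `b ≻_a M(a)`, `-1` if `M(a) ≻_a b`, `0` otherwise. -/
noncomputable def wt {A B : Type*} (pref : A → B → B → Prop) (M : A → B)
    (a : A) (b : B) : ℤ :=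
  letI := Classical.propDecidable
  if pref a b (M a) then 1 else if pref a (M a) b then -1 else 0

/-- If a perfect matching `M` admits a dual solution `α` with
`α_a + α_b ≥ wt_M(a,b)` on every edge and total sum `0`, then `M` is a popular
assignment: `Δ(N,M) ≤ 0` for every perfect matching `N`. -/
theorem stmt1 {A B : Type*} [Fintype A] [Fintype B]
    (E : A → B → Prop) (pref : A → B → B → Prop)
    (hirr : ∀ a b, ¬ pref a b b)
    (htrans : ∀ a b₁ b₂ b₃, pref a b₁ b₂ → pref a b₂ b₃ → pref a b₁ b₃)
    (hprefE : ∀ a b b', pref a b b' → E a b ∧ E a b')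
    (M : A → B) (hM : IsPM E M)
    (αA : A → ℤ) (αB : B → ℤ)
    (hfeas : ∀ a b, E a b → αA a + αB b ≥ wt pref M a b)
    (hsum : ∑ a, αA a + ∑ b, αB b = 0) :
    ∀ N, IsPM E N → Delta pref N M ≤ 0 := by
  classical
  intro N hN
  have hDelta : Delta pref N M = ∑ a, wt pref M a (N a) := by
    unfold Delta wt
    rw [sub_eq_iff_eq_add]
    rw [Finset.card_filter, Finset.card_filter]
    push_cast
    rw [← Finset.sum_add_distrib]
    apply Finset.sum_congr rfl
    intro a _
    by_cases h1 : pref a (N a) (M a)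
    · have h2 : ¬ pref a (M a) (N a) := fun h2 =>
        hirr a (N a) (htrans a _ _ _ h1 h2)
      simp [h1, h2]
    · by_cases h2 : pref a (M a) (N a) <;> simp [h1, h2]
  rw [hDelta]
  have hle : ∑ a, wt pref M a (N a) ≤ ∑ a, (αA a + αB (N a)) :=
    Finset.sum_le_sum fun a _ => hfeas a (N a) (hN.2 a)
  have hNB : ∑ a, αB (N a) = ∑ b, αB b := by
    exact Fintype.sum_bijective N hN.1 _ _ (fun a => rfl)
  calc ∑ a, wt pref M a (N a) ≤ ∑ a, (αA a + αB (N a)) := hle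
    _ = ∑ a, αA a + ∑ b, αB b := by rw [Finset.sum_add_distrib, hNB]
    _ = 0 := hsum
end

section
/- Let G = (A ∪ B, E) be a bipartite graph with partial order preferences and suppose there exists a function α : A ∪ B → ℤ with α_a + α_b ≥ wt_M(a,b) for all edges (a,b) ∈ E, α_a + α_{M(a)} = 0 for all a ∈ A (complementary slackness on M), and Σ_u α_u ≤ k for an integer k ≥ 0, where M is a perfect matching. Then the unpopularity margin μ(M) = max_N Δ(N,M), taken over all perfect matchings N, is at most k. -/
open Finset

/-- If a perfect matching `M` admits a dual-feasible `α` with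
complementary slackness on `M` and total sum at most `k ≥ 0`, then the
unpopularity margin of `M` is at most `k`, i.e. `Δ(N,M) ≤ k` for every
perfect matching `N`. -/
theorem stmt2 {A B : Type*} [Fintype A] [Fintype B]
    (E : A → B → Prop) (pref : A → B → B → Prop)
    (hirr : ∀ a b, ¬ pref a b b)
    (htrans : ∀ a b₁ b₂ b₃, pref a b₁ b₂ → pref a b₂ b₃ → pref a b₁ b₃)
    (hprefE : ∀ a b b', pref a b b' → E a b ∧ E a b')
    (M : A → B) (hM : IsPM E M)
    (αA : A → ℤ) (αB : B → ℤ) (k : ℤ) (hk : 0 ≤ k)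
    (hfeas : ∀ a b, E a b → αA a + αB b ≥ wt pref M a b)
    (hcs : ∀ a, αA a + αB (M a) = 0)
    (hsum : ∑ a, αA a + ∑ b, αB b ≤ k) :
    ∀ N, IsPM E N → Delta pref N M ≤ k := by
  classical
  intro N hN
  have hDelta : Delta pref N M = ∑ a, wt pref M a (N a) := by
    unfold Delta wt
    have key : ∀ a : A, (if pref a (N a) (M a) then (1:ℤ) else
        if pref a (M a) (N a) then -1 else 0) =
        (if pref a (N a) (M a) then (1:ℤ) else 0) -
        (if pref a (M a) (N a) then (1:ℤ) else 0) := by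
      intro a
      by_cases h1 : pref a (N a) (M a)
      · have h2 : ¬ pref a (M a) (N a) := fun h =>
          hirr a (N a) (htrans a _ _ _ h1 h)
        simp [h1, h2]
      · by_cases h2 : pref a (M a) (N a) <;> simp [h1, h2]
    rw [Finset.sum_congr rfl (fun a _ => key a), Finset.sum_sub_distrib]
    congr 1 <;> · rw [Finset.sum_ite, Finset.sum_const, Finset.sum_const]
                  simp
  have hbound : ∀ a, wt pref M a (N a) ≤ αA a + αB (N a) := fun a =>
    hfeas a (N a) (hN.2 a)
  have hNB : ∑ a, αB (N a) = ∑ b, αB b :=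
    Fintype.sum_bijective N hN.1 _ _ (fun _ => rfl)
  calc Delta pref N M = ∑ a, wt pref M a (N a) := hDelta
    _ ≤ ∑ a, (αA a + αB (N a)) := Finset.sum_le_sum fun a _ => hbound a
    _ = ∑ a, αA a + ∑ b, αB b := by rw [Finset.sum_add_distrib, hNB]
    _ ≤ k := hsum
end

section
/- Let G = (A ∪ B, E) be a bipartite instance with partial order preferences, let ℓ : B → ℕ be a level function, and let G_ℓ be the subgraph induced by ℓ: an edge (a,b) is in G_ℓ iff either (i) ℓ(b) = ℓ*(a) and a prefers no neighbor in level ℓ*(a) to b, or (ii) ℓ(b) = ℓ*(a) - 1, a prefers b to all her neighbors in level ℓ*(a), and a prefers none of her neighbors in level ℓ*(a)-1 to b, where ℓ*(a) = max_{b' ∈ Nbr(a)} ℓ(b'). If M is a perfect matching of G contained in G_ℓ, then M is a popular assignment in G. -/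
open Finset

/-- `ℓ*(a)`: the highest level of a neighbor of `a`. -/
noncomputable def lstar {A B : Type*} [Fintype B] (E : A → B → Prop)
    (ℓ : B → ℕ) (a : A) : ℕ :=
  letI := Classical.propDecidable
  (univ.filter fun b => E a b).sup ℓ

/-- Membership of edge `(a,b)` in the subgraph `G_ℓ` induced by the level
function `ℓ`: either (i) `ℓ(b) = ℓ*(a)` and `a` prefers no neighbor of level
`ℓ*(a)` to `b`, or (ii) `ℓ(b) = ℓ*(a) - 1`, `a` prefers `b` to all neighbors of
level `ℓ*(a)`, and prefers no neighbor of level `ℓ*(a) - 1` to `b`. -/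
def inEll {A B : Type*} [Fintype B] (E : A → B → Prop)
    (pref : A → B → B → Prop) (ℓ : B → ℕ) (a : A) (b : B) : Prop :=
  E a b ∧
    ((ℓ b = lstar E ℓ a ∧ ∀ b', E a b' → ℓ b' = lstar E ℓ a → ¬ pref a b' b) ∨
     (ℓ b + 1 = lstar E ℓ a ∧ (∀ b', E a b' → ℓ b' = lstar E ℓ a → pref a b b') ∧
      (∀ b', E a b' → ℓ b' + 1 = lstar E ℓ a → ¬ pref a b' b)))

/-- If `M` is a perfect matching of `G` all of whose edges lie in
the subgraph `G_ℓ` induced by a level function `ℓ`, then `M` is a popular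
assignment in `G`. -/
theorem stmt3 {A B : Type*} [Fintype A] [Fintype B]
    (E : A → B → Prop) (pref : A → B → B → Prop)
    (hirr : ∀ a b, ¬ pref a b b)
    (htrans : ∀ a b₁ b₂ b₃, pref a b₁ b₂ → pref a b₂ b₃ → pref a b₁ b₃)
    (hprefE : ∀ a b b', pref a b b' → E a b ∧ E a b')
    (ℓ : B → ℕ) (M : A → B) (hM : IsPM E M)
    (hMEll : ∀ a, inEll E pref ℓ a (M a)) :
    ∀ N, IsPM E N → Delta pref N M ≤ 0 := by
  classical
  intro N hN
  -- pointwise key bound: wt(a, N a) ≤ ℓ(M a) - ℓ(N a)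
  have key : ∀ a, wt pref M a (N a) ≤ (ℓ (M a) : ℤ) - (ℓ (N a) : ℤ) := by
    intro a
    obtain ⟨hE, hcase⟩ := hMEll a
    have hNb : E a (N a) := hN.2 a
    have hble : ℓ (N a) ≤ lstar E ℓ a := by
      apply Finset.le_sup
      simp [lstar, hNb]
    have hwt1 : wt pref M a (N a) ≤ 1 := by
      unfold wt; split_ifs <;> omega
    rcases hcase with ⟨hlev, hnp⟩ | ⟨hlev, hpref, hnp⟩
    · by_cases hb : ℓ (N a) = lstar E ℓ a
      · have hnot : ¬ pref a (N a) (M a) := hnp _ hNb hb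
        unfold wt
        rw [if_neg hnot]
        split_ifs <;> omega
      · refine le_trans hwt1 ?_
        omega
    · by_cases hb : ℓ (N a) = lstar E ℓ a
      · have h1 : pref a (M a) (N a) := hpref _ hNb hb
        have h2 : ¬ pref a (N a) (M a) := fun h => hirr a (N a) (htrans a _ _ _ h h1)
        unfold wt
        rw [if_neg h2, if_pos h1]
        omega
      · by_cases hb2 : ℓ (N a) + 1 = lstar E ℓ a
        · have hnot : ¬ pref a (N a) (M a) := hnp _ hNb hb2
          unfold wt
          rw [if_neg hnot]
          split_ifs <;> omega
        · refine le_trans hwt1 ?_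
          omega
  -- Delta equals the sum of weights
  have hexcl : ∀ a, ¬ (pref a (N a) (M a) ∧ pref a (M a) (N a)) := by
    rintro a ⟨h1, h2⟩
    exact hirr a (N a) (htrans a _ _ _ h1 h2)
  have hsplit : ∀ a, wt pref M a (N a) =
      (if pref a (N a) (M a) then (1 : ℤ) else 0) -
      (if pref a (M a) (N a) then (1 : ℤ) else 0) := by
    intro a
    unfold wt
    by_cases h1 : pref a (N a) (M a)
    · have h2 : ¬ pref a (M a) (N a) := fun h => hexcl a ⟨h1, h⟩
      simp [h1, h2]
    · by_cases h2 : pref a (M a) (N a) <;> simp [h1, h2]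
  have hDelta : Delta pref N M = ∑ a, wt pref M a (N a) := by
    unfold Delta
    rw [Finset.sum_congr rfl (fun a _ => hsplit a), Finset.sum_sub_distrib]
    congr 1 <;> simp [Finset.sum_boole]
  have hsum0 : ∑ a, ((ℓ (M a) : ℤ) - (ℓ (N a) : ℤ)) = 0 := by
    rw [Finset.sum_sub_distrib]
    rw [Fintype.sum_bijective M hM.1 _ (fun b => (ℓ b : ℤ)) (fun a => rfl)]
    rw [Fintype.sum_bijective N hN.1 _ (fun b => (ℓ b : ℤ)) (fun a => rfl)]
    omega
  calc Delta pref N M = ∑ a, wt pref M a (N a) := hDelta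
    _ ≤ ∑ a, ((ℓ (M a) : ℤ) - (ℓ (N a) : ℤ)) := Finset.sum_le_sum (fun a _ => key a)
    _ = 0 := hsum0
end

section
/- Let G = (A ∪ B, E) be a bipartite instance with partial order preferences. If M is a popular assignment in G admitting a dual certificate α (a feasible integral solution to the dual LP with α_a ≥ 0 for a ∈ A, α_b ≤ 0 for b ∈ B, and Σ_u α_u = 0), then M is a perfect matching contained in the subgraph G_{ℓ_α} induced by the level function ℓ_α(b) = -α_b, and moreover α_a = ℓ_α(M(a)) for all a ∈ A. -/
open Finset

/-- If `M` is a popular assignment with dual certificate `α`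
(feasible, `α_a ≥ 0` on agents, `α_b ≤ 0` on objects, total sum `0`), then `M`
is a perfect matching of the subgraph `G_{ℓ_α}` induced by the level function
`ℓ_α(b) = -α_b`, and moreover `α_a = ℓ_α(M(a))` for all agents `a`. -/
theorem stmt4 {A B : Type*} [Fintype A] [Fintype B]
    (E : A → B → Prop) (pref : A → B → B → Prop)
    (hirr : ∀ a b, ¬ pref a b b)
    (htrans : ∀ a b₁ b₂ b₃, pref a b₁ b₂ → pref a b₂ b₃ → pref a b₁ b₃)
    (hprefE : ∀ a b b', pref a b b' → E a b ∧ E a b')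
    (M : A → B) (hM : IsPM E M)
    (hpop : ∀ N, IsPM E N → Delta pref N M ≤ 0)
    (αA : A → ℤ) (αB : B → ℤ)
    (hfeas : ∀ a b, E a b → αA a + αB b ≥ wt pref M a b)
    (hAnn : ∀ a, 0 ≤ αA a) (hBnp : ∀ b, αB b ≤ 0)
    (hsum : ∑ a, αA a + ∑ b, αB b = 0) :
    (∀ a, inEll E pref (fun b => (-αB b).toNat) a (M a)) ∧
      ∀ a, αA a = (((-αB (M a)).toNat : ℕ) : ℤ) := by
  classical
  set ℓ : B → ℕ := fun b => (-αB b).toNat with hℓdef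
  have hℓcast : ∀ b, (ℓ b : ℤ) = -αB b := fun b =>
    Int.toNat_of_nonneg (by linarith [hBnp b])
  have hwt0 : ∀ a, wt pref M a (M a) = 0 := by
    intro a; simp [wt, hirr]
  have hkey : ∀ a, αA a + αB (M a) = 0 := by
    have hsum' : ∑ a, (αA a + αB (M a)) = 0 := by
      rw [Finset.sum_add_distrib,
        Fintype.sum_bijective M hM.1 (fun a => αB (M a)) αB (fun a => rfl)]
      exact hsum
    have hnn : ∀ a ∈ (univ : Finset A), 0 ≤ αA a + αB (M a) := by
      intro a _
      have := hfeas a (M a) (hM.2 a)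
      rw [hwt0 a] at this; linarith
    intro a
    have := (Finset.sum_eq_zero_iff_of_nonneg hnn).mp hsum' a (mem_univ a)
    linarith
  have hsecond : ∀ a, αA a = ((ℓ (M a) : ℕ) : ℤ) := by
    intro a
    rw [hℓcast]
    have := hkey a; linarith
  refine ⟨?_, hsecond⟩
  intro a
  have hwtlb : ∀ b, (-1 : ℤ) ≤ wt pref M a b := by
    intro b; unfold wt; split_ifs <;> norm_num
  have hub : ∀ b, E a b → ℓ b ≤ ℓ (M a) + 1 := by
    intro b hb
    have h1 := hfeas a b hb
    have h2 := hwtlb b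
    have h3 := hkey a
    have : (ℓ b : ℤ) ≤ (ℓ (M a) : ℤ) + 1 := by rw [hℓcast, hℓcast]; linarith
    exact_mod_cast this
  have hpref_low : ∀ b, E a b → pref a b (M a) → ℓ b + 1 ≤ ℓ (M a) := by
    intro b hb hp
    have h1 := hfeas a b hb
    have hw : wt pref M a b = 1 := by simp [wt, hp]
    rw [hw] at h1
    have h3 := hkey a
    have : (ℓ b : ℤ) + 1 ≤ (ℓ (M a) : ℤ) := by rw [hℓcast, hℓcast]; linarith
    exact_mod_cast this
  have hprefM : ∀ b, E a b → ℓ (M a) + 1 = ℓ b → pref a (M a) b := by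
    intro b hb hlb
    have h1 := hfeas a b hb
    have h3 := hkey a
    have hcast : (ℓ (M a) : ℤ) + 1 = (ℓ b : ℤ) := by exact_mod_cast congrArg (Nat.cast (R := ℤ)) hlb
    rw [hℓcast, hℓcast] at hcast
    have hw : wt pref M a b ≤ -1 := by linarith
    unfold wt at hw
    split_ifs at hw with h1' h2'
    · norm_num at hw
    · exact h2'
    · norm_num at hw
  have hMmem : M a ∈ (univ : Finset B).filter (fun b => E a b) := by
    simp [hM.2 a]
  have hL1 : ℓ (M a) ≤ lstar E ℓ a := Finset.le_sup hMmem
  have hL2 : lstar E ℓ a ≤ ℓ (M a) + 1 := by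
    apply Finset.sup_le
    intro b hb
    exact hub b (by simpa using hb)
  refine ⟨hM.2 a, ?_⟩
  rcases (by omega : lstar E ℓ a = ℓ (M a) ∨ lstar E ℓ a = ℓ (M a) + 1) with hc | hc
  · left
    refine ⟨hc.symm, ?_⟩
    intro b' hb' hlb' hp
    have := hpref_low b' hb' hp
    omega
  · right
    refine ⟨hc.symm, ?_, ?_⟩
    · intro b' hb' hlb'
      exact hprefM b' hb' (by omega)
    · intro b' hb' hlb' hp
      have := hpref_low b' hb' hp
      omega
end

section
/- Let G = (A ∪ B, E) be a bipartite instance with partial order preferences, let ℓ, ℓ' : B → ℕ be level functions with ℓ(b) ≤ ℓ'(b) for all b ∈ B, let M be a matching in G_ℓ and M' a matching in G_{ℓ'}, and let b₀ ∈ B be matched in M' but not in M. Let P be the path in the symmetric difference M ⊕ M' containing b₀. If P contains an edge not in E_ℓ, then ℓ(b₀) < ℓ'(b₀). -/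
open Finset

/-- A (not necessarily perfect) matching in the bipartite graph with edge
relation `E`, given as a partial assignment `M : A → Option B`. -/
def IsMatching {A B : Type*} (E : A → B → Prop) (M : A → Option B) : Prop :=
  (∀ a b, M a = some b → E a b) ∧ ∀ a a' b, M a = some b → M a' = some b → a = a'

lemma le_lstar_of_E {A B : Type*} [Fintype B] (E : A → B → Prop) (ℓ : B → ℕ)
    {a : A} {b : B} (h : E a b) : ℓ b ≤ lstar E ℓ a := by
  classical
  unfold lstar
  exact Finset.le_sup (by simp [h])

lemma lstar_le_lstar {A B : Type*} [Fintype B] (E : A → B → Prop)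
    (ℓ ℓ' : B → ℕ) (hle : ∀ b, ℓ b ≤ ℓ' b) (a : A) :
    lstar E ℓ a ≤ lstar E ℓ' a := by
  classical
  unfold lstar
  exact Finset.sup_mono_fun fun b _ => hle b

/-- An edge of `G_{ℓ'}` whose `B`-endpoint has equal levels is an edge of `G_ℓ`. -/
lemma key_lemma {A B : Type*} [Fintype B] (E : A → B → Prop) (pref : A → B → B → Prop)
    (hirr : ∀ a b, ¬ pref a b b)
    (htrans : ∀ a b₁ b₂ b₃, pref a b₁ b₂ → pref a b₂ b₃ → pref a b₁ b₃)
    (ℓ ℓ' : B → ℕ) (hle : ∀ b, ℓ b ≤ ℓ' b) (a : A) (b : B)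
    (h' : inEll E pref ℓ' a b) (heq : ℓ b = ℓ' b) : inEll E pref ℓ a b := by
  obtain ⟨hEab, hcase⟩ := h'
  have hbL : ℓ b ≤ lstar E ℓ a := le_lstar_of_E E ℓ hEab
  have hLL' : lstar E ℓ a ≤ lstar E ℓ' a := lstar_le_lstar E ℓ ℓ' hle a
  refine ⟨hEab, ?_⟩
  rcases hcase with ⟨h1, h2⟩ | ⟨h1, h2, h3⟩
  · left
    refine ⟨by omega, fun b' hEb' hlb' hp => ?_⟩
    have hb'le : ℓ' b' ≤ lstar E ℓ' a := le_lstar_of_E E ℓ' hEb'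
    have h1' : ℓ' b' = lstar E ℓ' a := by have := hle b'; omega
    exact h2 b' hEb' h1' hp
  · have hsplit : lstar E ℓ a = ℓ b ∨ lstar E ℓ a = ℓ b + 1 := by omega
    rcases hsplit with hL | hL
    · left
      refine ⟨hL.symm, fun b' hEb' hlb' hp => ?_⟩
      have hb'le : ℓ' b' ≤ lstar E ℓ' a := le_lstar_of_E E ℓ' hEb'
      have : ℓ' b' = lstar E ℓ' a ∨ ℓ' b' + 1 = lstar E ℓ' a := by
        have := hle b'; omega
      rcases this with hh | hh
      · exact hirr a b' (htrans a b' b b' hp (h2 b' hEb' hh))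
      · exact h3 b' hEb' hh hp
    · right
      refine ⟨by omega, fun b' hEb' hlb' => ?_, fun b' hEb' hlb' hp => ?_⟩
      · have hb'le : ℓ' b' ≤ lstar E ℓ' a := le_lstar_of_E E ℓ' hEb'
        have h1' : ℓ' b' = lstar E ℓ' a := by have := hle b'; omega
        exact h2 b' hEb' h1'
      · have hb'le : ℓ' b' ≤ lstar E ℓ' a := le_lstar_of_E E ℓ' hEb'
        have : ℓ' b' = lstar E ℓ' a ∨ ℓ' b' + 1 = lstar E ℓ' a := by
          have := hle b'; omega
        rcases this with hh | hh
        · exact hirr a b' (htrans a b' b b' hp (h2 b' hEb' hh))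
        · exact h3 b' hEb' hh hp

/-- Level equality propagates along a path edge pair `(a,b) ∈ E_{ℓ'}`,
`(a,bp) ∈ E_ℓ`. -/
lemma propstep {A B : Type*} [Fintype B] (E : A → B → Prop) (pref : A → B → B → Prop)
    (hirr : ∀ a b, ¬ pref a b b)
    (htrans : ∀ a b₁ b₂ b₃, pref a b₁ b₂ → pref a b₂ b₃ → pref a b₁ b₃)
    (ℓ ℓ' : B → ℕ) (hle : ∀ b, ℓ b ≤ ℓ' b) (a : A) (b bp : B)
    (h' : inEll E pref ℓ' a b) (h : inEll E pref ℓ a bp) (heq : ℓ b = ℓ' b) :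
    ℓ bp = ℓ' bp := by
  by_contra hne
  have hlt : ℓ bp < ℓ' bp := lt_of_le_of_ne (hle bp) hne
  obtain ⟨hEab, hc'⟩ := h'
  obtain ⟨hEabp, hc⟩ := h
  have h1 := le_lstar_of_E E ℓ hEab
  have h2' := le_lstar_of_E E ℓ' hEabp
  have hLL' := lstar_le_lstar E ℓ ℓ' hle a
  rcases hc' with ⟨g1, g2⟩ | ⟨g1, g2, g3⟩ <;> rcases hc with ⟨k1, k2⟩ | ⟨k1, k2, k3⟩
  · omega
  · have hp1 : pref a bp b := k2 b hEab (by omega)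
    exact g2 bp hEabp (by omega) hp1
  · have hsplit : lstar E ℓ a = ℓ b ∨ lstar E ℓ a = ℓ b + 1 := by omega
    rcases hsplit with hL | hL
    · have hp1 : pref a b bp := g2 bp hEabp (by omega)
      exact k2 b hEab (by omega) hp1
    · omega
  · have hsplit : lstar E ℓ a = ℓ b ∨ lstar E ℓ a = ℓ b + 1 := by omega
    rcases hsplit with hL | hL
    · have : ℓ' bp = lstar E ℓ' a ∨ ℓ' bp + 1 = lstar E ℓ' a := by omega
      rcases this with hh | hh
      · have hp1 : pref a b bp := g2 bp hEabp hh
        have hp2 : pref a bp b := k2 b hEab (by omega)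
        exact hirr a b (htrans a b bp b hp1 hp2)
      · exact g3 bp hEabp hh (k2 b hEab (by omega))
    · have hp1 : pref a b bp := g2 bp hEabp (by omega)
      exact k3 b hEab (by omega) hp1

/-- Let `ℓ ≤ ℓ'` be level functions, `M` a matching in `G_ℓ`, `M'`
a matching in `G_{ℓ'}`, and `b₀` an object matched in `M'` but not in `M`.  The
path `P` of `M ⊕ M'` containing `b₀` starts with an `M'`-edge and alternates;
it is encoded by its vertices `b₀ = b 0, a 0, b 1, a 1, …` with
`M'(a i) = b i` and `M(a i) = b (i+1)`.  If `P` contains an edge `(a t, b t)`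
not in `E_ℓ`, then `ℓ(b₀) < ℓ'(b₀)`. -/
theorem stmt5 {A B : Type*} [Fintype A] [Fintype B]
    (E : A → B → Prop) (pref : A → B → B → Prop)
    (hirr : ∀ a b, ¬ pref a b b)
    (htrans : ∀ a b₁ b₂ b₃, pref a b₁ b₂ → pref a b₂ b₃ → pref a b₁ b₃)
    (hprefE : ∀ a b b', pref a b b' → E a b ∧ E a b')
    (ℓ ℓ' : B → ℕ) (hle : ∀ b, ℓ b ≤ ℓ' b)
    (M M' : A → Option B)
    (hMmatch : IsMatching (inEll E pref ℓ) M)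
    (hM'match : IsMatching (inEll E pref ℓ') M')
    (b₀ : B)
    (hb₀M' : ∃ a₀, M' a₀ = some b₀)
    (hb₀M : ∀ a', M a' ≠ some b₀)
    (t : ℕ) (a : ℕ → A) (b : ℕ → B) (hb0 : b 0 = b₀)
    (hpathM' : ∀ i ≤ t, M' (a i) = some (b i))
    (hpathM : ∀ i < t, M (a i) = some (b (i + 1)))
    (hbad : ¬ inEll E pref ℓ (a t) (b t)) :
    ℓ b₀ < ℓ' b₀ := by
  by_contra hnot
  have heq0 : ℓ b₀ = ℓ' b₀ := le_antisymm (hle b₀) (not_lt.mp hnot)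
  have hkey : ∀ i, i ≤ t → ℓ (b i) = ℓ' (b i) := by
    intro i
    induction i with
    | zero => intro _; rw [hb0]; exact heq0
    | succ n ih =>
      intro hi
      have h' : inEll E pref ℓ' (a n) (b n) := hM'match.1 _ _ (hpathM' n (by omega))
      have h : inEll E pref ℓ (a n) (b (n + 1)) := hMmatch.1 _ _ (hpathM n (by omega))
      exact propstep E pref hirr htrans ℓ ℓ' hle _ _ _ h' h (ih (by omega))
  have hteq := hkey t le_rfl
  have h' := hM'match.1 _ _ (hpathM' t le_rfl)
  exact hbad (key_lemma E pref hirr htrans ℓ ℓ' hle _ _ h' hteq)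
end

section
/- Let G = (A ∪ B, E) be a bipartite graph with partial order preferences and let κ ≥ 1 be an integer. If M is a matching in G that is popular with penalty κ (i.e., Σ_{a∈A} vote^κ_a(N,M) ≤ 0 for every matching N), then every M-augmenting path in G contains at least κ+1 agents, and consequently |M| ≥ (κ/(κ+1))·|M_max| where M_max is a maximum matching of G. -/
open Finset

/-- `vote^κ_a(N, M)`: `+1`/`-1` for a preference between matched partners,
`+κ`/`-κ` when `a` is matched in exactly one of `N`, `M`, and `0` otherwise. -/
noncomputable def vote {A B : Type*} (κ : ℤ) (pref : A → B → B → Prop)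
    (N M : A → Option B) (a : A) : ℤ :=
  letI := Classical.propDecidable
  match N a, M a with
  | some bn, some bm => if pref a bn bm then 1 else if pref a bm bn then -1 else 0
  | some _, none => κ
  | none, some _ => -κ
  | none, none => 0

/-- The size of a matching: the number of matched agents. -/
def msize {A B : Type*} [Fintype A] (M : A → Option B) : ℕ :=
  (univ.filter fun a => (M a).isSome = true).card

/-- If a matching `M` is popular with penalty `κ ≥ 1`, then every
`M`-augmenting path (encoded by its agents `a 0, …, a t` and objects
`b 0, …, b t`) contains at least `κ + 1` agents, i.e. `κ ≤ t + 1 - 1 = t`;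
consequently `(κ+1)·|M| ≥ κ·|N|` for every matching `N`, in particular for a
maximum matching. -/
theorem stmt9 {A B : Type*} [Fintype A] [Fintype B]
    (E : A → B → Prop) (pref : A → B → B → Prop)
    (hirr : ∀ a b, ¬ pref a b b)
    (htrans : ∀ a b₁ b₂ b₃, pref a b₁ b₂ → pref a b₂ b₃ → pref a b₁ b₃)
    (hprefE : ∀ a b b', pref a b b' → E a b ∧ E a b')
    (κ : ℤ) (hκ : 1 ≤ κ)
    (M : A → Option B) (hM : IsMatching E M)
    (hpop : ∀ N, IsMatching E N → ∑ a, vote κ pref N M a ≤ 0) :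
    (∀ (t : ℕ) (a : ℕ → A) (b : ℕ → B),
        Function.Injective (fun i : Fin (t + 1) => a i) →
        Function.Injective (fun i : Fin (t + 1) => b i) →
        M (a 0) = none →
        (∀ i ≤ t, E (a i) (b i)) →
        (∀ i ≤ t, M (a i) ≠ some (b i)) →
        (∀ i < t, M (a (i + 1)) = some (b i)) →
        (∀ a', M a' ≠ some (b t)) →
        κ ≤ (t : ℤ)) ∧
    ∀ N, IsMatching E N → κ * (msize N : ℤ) ≤ (κ + 1) * (msize M : ℤ) := by
  classical
  constructor
  · intro t a b hainj hbinj ha0 hE hMne hMnext hbt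
    by_contra hlt
    push_neg at hlt
    have haInj : ∀ i j, i ≤ t → j ≤ t → a i = a j → i = j := by
      intro i j hi hj h
      have := hainj (a₁ := ⟨i, Nat.lt_succ_of_le hi⟩) (a₂ := ⟨j, Nat.lt_succ_of_le hj⟩) h
      simpa using congrArg Fin.val this
    have hbInj : ∀ i j, i ≤ t → j ≤ t → b i = b j → i = j := by
      intro i j hi hj h
      have := hbinj (a₁ := ⟨i, Nat.lt_succ_of_le hi⟩) (a₂ := ⟨j, Nat.lt_succ_of_le hj⟩) h
      simpa using congrArg Fin.val this
    set N : A → Option B := fun x =>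
      if h : ∃ i, i ≤ t ∧ a i = x then some (b h.choose) else M x with hNdef
    have hNa : ∀ j, j ≤ t → N (a j) = some (b j) := by
      intro j hj
      have hex : ∃ i, i ≤ t ∧ a i = a j := ⟨j, hj, rfl⟩
      have hch : hex.choose = j := haInj _ _ hex.choose_spec.1 hj hex.choose_spec.2
      simp only [hNdef, dif_pos hex, hch]
    have hNoff : ∀ x, (∀ i, i ≤ t → a i ≠ x) → N x = M x := by
      intro x hx
      have hne : ¬ ∃ i, i ≤ t ∧ a i = x := by
        rintro ⟨i, hi, h⟩; exact hx i hi h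
      simp only [hNdef, dif_neg hne]
    have hMoff : ∀ z i, i ≤ t → M z = some (b i) → ∃ j, j ≤ t ∧ a j = z := by
      intro z i hi hmz
      rcases Nat.lt_or_ge i t with h | h
      · exact ⟨i + 1, h, (hM.2 z (a (i + 1)) (b i) hmz (hMnext i h)).symm⟩
      · have hit : i = t := le_antisymm hi h
        exact absurd hmz (hit ▸ hbt z)
    have hNchar : ∀ z c, N z = some c →
        (∃ i, i ≤ t ∧ a i = z ∧ b i = c) ∨
        (M z = some c ∧ ∀ i, i ≤ t → a i ≠ z) := by
      intro z c hz
      by_cases hx : ∃ i, i ≤ t ∧ a i = z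
      · obtain ⟨i, hi, hai⟩ := hx
        left
        have h1 := hNa i hi
        rw [hai, hz] at h1
        exact ⟨i, hi, hai, Option.some.inj h1.symm⟩
      · push_neg at hx
        right
        exact ⟨(hNoff z hx) ▸ hz, hx⟩
    have hN : IsMatching E N := by
      constructor
      · intro x c hc
        rcases hNchar x c hc with ⟨i, hi, hax, hbx⟩ | ⟨hm, _⟩
        · rw [← hax, ← hbx]; exact hE i hi
        · exact hM.1 x c hm
      · intro x y c hx hy
        rcases hNchar x c hx with ⟨i, hi, hax, hbx⟩ | ⟨hmx, hoffx⟩ <;>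
          rcases hNchar y c hy with ⟨j, hj, hay, hby⟩ | ⟨hmy, hoffy⟩
        · have hij : i = j := hbInj i j hi hj (hbx.trans hby.symm)
          rw [← hax, ← hay, hij]
        · obtain ⟨j, hj, haj⟩ := hMoff y i hi (hbx ▸ hmy)
          exact absurd haj (hoffy j hj)
        · obtain ⟨i, hi, hai⟩ := hMoff x j hj (hby ▸ hmx)
          exact absurd hai (hoffx i hi)
        · exact hM.2 x y c hmx hmy
    have hvote0 : ∀ x, (∀ i, i ≤ t → a i ≠ x) → vote κ pref N M x = 0 := by
      intro x hx
      have hNM := hNoff x hx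
      rcases hmx : M x with _ | c
      · simp [vote, hNM, hmx]
      · simp [vote, hNM, hmx, hirr x c]
    have hsub : ∑ x ∈ (Finset.range (t + 1)).image a, vote κ pref N M x
        = ∑ x, vote κ pref N M x := by
      apply Finset.sum_subset (Finset.subset_univ _)
      intro x _ hx
      apply hvote0
      intro i hi hax
      exact hx (Finset.mem_image.mpr ⟨i, Finset.mem_range.mpr (Nat.lt_succ_of_le hi), hax⟩)
    have himg : ∑ x ∈ (Finset.range (t + 1)).image a, vote κ pref N M x
        = ∑ i ∈ Finset.range (t + 1), vote κ pref N M (a i) := by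
      apply Finset.sum_image
      intro i hi j hj h
      exact haInj i j (Nat.lt_succ_iff.mp (Finset.mem_range.mp hi))
        (Nat.lt_succ_iff.mp (Finset.mem_range.mp hj)) h
    have hsplit : ∑ i ∈ Finset.range (t + 1), vote κ pref N M (a i)
        = (∑ i ∈ Finset.range t, vote κ pref N M (a (i + 1))) + vote κ pref N M (a 0) :=
      Finset.sum_range_succ' _ t
    have hv0 : vote κ pref N M (a 0) = κ := by
      simp [vote, hNa 0 (Nat.zero_le t), ha0]
    have hvi : ∀ i, i < t → -1 ≤ vote κ pref N M (a (i + 1)) := by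
      intro i hi
      have hn := hNa (i + 1) hi
      have hm := hMnext i hi
      simp only [vote, hn, hm]
      split_ifs <;> norm_num
    have hlow : -(t : ℤ) ≤ ∑ i ∈ Finset.range t, vote κ pref N M (a (i + 1)) := by
      have h := Finset.card_nsmul_le_sum (Finset.range t)
        (fun i => vote κ pref N M (a (i + 1))) (-1)
        (fun i hi => hvi i (Finset.mem_range.mp hi))
      simpa [Finset.card_range] using h
    have hpopN := hpop N hN
    rw [← hsub, himg, hsplit, hv0] at hpopN
    linarith
  · intro N hN
    have hpopN := hpop N hN
    have hptwise : ∀ x : A, κ * (if (N x).isSome = true then (1 : ℤ) else 0)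
        - κ * (if (M x).isSome = true then (1 : ℤ) else 0)
        - (if (N x).isSome = true ∧ (M x).isSome = true then (1 : ℤ) else 0)
        ≤ vote κ pref N M x := by
      intro x
      rcases hn : N x with _ | c <;> rcases hm : M x with _ | d <;>
        simp [vote, hn, hm]
      split_ifs <;> norm_num
    have hsum : κ * ((univ.filter fun x => (N x).isSome = true).card : ℤ)
        - κ * ((univ.filter fun x => (M x).isSome = true).card : ℤ)
        - ((univ.filter fun x => (N x).isSome = true ∧ (M x).isSome = true).card : ℤ)
        ≤ ∑ x, vote κ pref N M x := by
      calc κ * ((univ.filter fun x => (N x).isSome = true).card : ℤ)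
          - κ * ((univ.filter fun x => (M x).isSome = true).card : ℤ)
          - ((univ.filter fun x => (N x).isSome = true ∧ (M x).isSome = true).card : ℤ)
          = ∑ x : A, (κ * (if (N x).isSome = true then (1 : ℤ) else 0)
              - κ * (if (M x).isSome = true then (1 : ℤ) else 0)
              - (if (N x).isSome = true ∧ (M x).isSome = true then (1 : ℤ) else 0)) := by
            rw [Finset.sum_sub_distrib, Finset.sum_sub_distrib, ← Finset.mul_sum,
              ← Finset.mul_sum, Finset.sum_boole, Finset.sum_boole, Finset.sum_boole]
        _ ≤ ∑ x, vote κ pref N M x := Finset.sum_le_sum fun x _ => hptwise x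
    have hZle : ((univ.filter fun x => (N x).isSome = true ∧ (M x).isSome = true).card : ℤ)
        ≤ ((univ.filter fun x => (M x).isSome = true).card : ℤ) := by
      have : (univ.filter fun x => (N x).isSome = true ∧ (M x).isSome = true)
          ⊆ (univ.filter fun x => (M x).isSome = true) := by
        intro x hx
        simp only [Finset.mem_filter] at hx ⊢
        exact ⟨hx.1, hx.2.2⟩
      exact_mod_cast Finset.card_le_card this
    have hMsize : (msize M : ℤ) = ((univ.filter fun x => (M x).isSome = true).card : ℤ) := by
      simp [msize]
    have hNsize : (msize N : ℤ) = ((univ.filter fun x => (N x).isSome = true).card : ℤ) := by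
      simp [msize]
    rw [hMsize, hNsize]
    linarith
end

section
/- Let M be a perfect matching in a bipartite graph G = (A ∪ B, E) with partial order preferences, and let α be an integral feasible solution to the dual LP (α_a + α_b ≥ wt_M(a,b) for all edges) with α_b ≤ 0 for all b ∈ B, chosen among optimal dual solutions to maximize Σ_{b∈B} α_b. Then the set of values {−α_b : b ∈ B} is a set of consecutive integers containing 0 or is a subset of {0}; in particular α_b ∈ {0, -1, ..., -(n-1)} for all b ∈ B, where n = |B|. -/
open Finset

/-- Let `α` be an integral feasible dual solution with `α_b ≤ 0`
on objects which is optimal and, among optimal dual solutions with nonpositive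
object values, maximizes `∑_{b∈B} α_b`.  Then the values `-α_b` have no gap:
whenever some `α_b ≤ -(r+1)` there is some `b` with `α_b = -r`; in particular
`α_b ∈ {0, -1, …, -(n-1)}` for all `b ∈ B`, where `n = |B|`. -/
theorem stmt10 {A B : Type*} [Fintype A] [Fintype B]
    (E : A → B → Prop) (pref : A → B → B → Prop)
    (hirr : ∀ a b, ¬ pref a b b)
    (htrans : ∀ a b₁ b₂ b₃, pref a b₁ b₂ → pref a b₂ b₃ → pref a b₁ b₃)
    (hprefE : ∀ a b b', pref a b b' → E a b ∧ E a b')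
    (M : A → B) (hM : IsPM E M)
    (αA : A → ℤ) (αB : B → ℤ)
    (hfeas : ∀ a b, E a b → αA a + αB b ≥ wt pref M a b)
    (hBnp : ∀ b, αB b ≤ 0)
    (hopt : ∀ (yA : A → ℤ) (yB : B → ℤ),
        (∀ a b, E a b → yA a + yB b ≥ wt pref M a b) →
        ∑ a, αA a + ∑ b, αB b ≤ ∑ a, yA a + ∑ b, yB b)
    (hmaxB : ∀ (yA : A → ℤ) (yB : B → ℤ),
        (∀ a b, E a b → yA a + yB b ≥ wt pref M a b) →
        (∀ b, yB b ≤ 0) →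
        ∑ a, yA a + ∑ b, yB b = ∑ a, αA a + ∑ b, αB b →
        ∑ b, yB b ≤ ∑ b, αB b) :
    (∀ r : ℕ, (∃ b, αB b ≤ -(r : ℤ) - 1) → ∃ b, αB b = -(r : ℤ)) ∧
    ∀ b, -(Fintype.card B : ℤ) + 1 ≤ αB b ∧ αB b ≤ 0 := by

  classical
  have hwt_le : ∀ a b, wt pref M a b ≤ 1 := by
    intro a b; unfold wt; split_ifs <;> omega
  have hwtM : ∀ a, wt pref M a (M a) = 0 := by
    intro a; unfold wt; simp [hirr]
  have hA : ∀ a, αA a + αB (M a) ≥ 0 := by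
    intro a; have := hfeas a (M a) (hM.2 a); rwa [hwtM] at this
  have Hgap : ∀ r : ℕ, (∃ b, αB b ≤ -(r : ℤ) - 1) → ∃ b, αB b = -(r : ℤ) := by
    intro r ⟨b0, hb0⟩
    by_contra hne
    push_neg at hne
    have hout : ∀ b, ¬ (αB b ≤ -(r:ℤ)-1) → -(r:ℤ)+1 ≤ αB b := by
      intro b h; have := hne b; omega
    set yB : B → ℤ := fun b => if αB b ≤ -(r:ℤ)-1 then αB b + 1 else αB b with hyB
    set yA : A → ℤ := fun a => if αB (M a) ≤ -(r:ℤ)-1 then αA a - 1 else αA a with hyA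
    have hfeas' : ∀ a b, E a b → yA a + yB b ≥ wt pref M a b := by
      intro a b hab
      have h1 := hfeas a b hab
      have h2 := hA a
      have h3 := hwt_le a b
      simp only [hyA, hyB]
      split_ifs with hMa hb hb
      · omega
      · have h4 := hout b hb; omega
      · omega
      · omega
    have hnp : ∀ b, yB b ≤ 0 := by
      intro b; simp only [hyB]; split_ifs with h
      · omega
      · exact hBnp b
    have hsumA : ∑ a, yA a = ∑ a, αA a +
        ∑ a, (if αB (M a) ≤ -(r:ℤ)-1 then (-1:ℤ) else 0) := by
      rw [← Finset.sum_add_distrib]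
      apply Finset.sum_congr rfl
      intro a _
      simp only [hyA]; split_ifs <;> ring
    have hsumB : ∑ b, yB b = ∑ b, αB b +
        ∑ b, (if αB b ≤ -(r:ℤ)-1 then (1:ℤ) else 0) := by
      rw [← Finset.sum_add_distrib]
      apply Finset.sum_congr rfl
      intro b _
      simp only [hyB]; split_ifs <;> ring
    have hbij : ∑ a, (if αB (M a) ≤ -(r:ℤ)-1 then (1:ℤ) else 0) =
        ∑ b, (if αB b ≤ -(r:ℤ)-1 then (1:ℤ) else 0) :=
      Fintype.sum_bijective M hM.1 _ _ (fun a => rfl)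
    have hneg : ∑ a, (if αB (M a) ≤ -(r:ℤ)-1 then (-1:ℤ) else 0) =
        - ∑ a, (if αB (M a) ≤ -(r:ℤ)-1 then (1:ℤ) else 0) := by
      rw [← Finset.sum_neg_distrib]
      apply Finset.sum_congr rfl
      intro a _; split_ifs <;> ring
    have hsumeq : ∑ a, yA a + ∑ b, yB b = ∑ a, αA a + ∑ b, αB b := by
      rw [hsumA, hsumB, hneg, hbij]; ring
    have hle := hmaxB yA yB hfeas' hnp hsumeq
    have hpos : (1:ℤ) ≤ ∑ b, (if αB b ≤ -(r:ℤ)-1 then (1:ℤ) else 0) := by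
      have := Finset.single_le_sum (f := fun b => if αB b ≤ -(r:ℤ)-1 then (1:ℤ) else 0)
        (fun b _ => by by_cases h : αB b ≤ -(r:ℤ)-1 <;> simp [h]) (Finset.mem_univ b0)
      simpa [hb0] using this
    omega
  refine ⟨Hgap, ?_⟩
  intro b
  refine ⟨?_, hBnp b⟩
  by_contra hcon
  push_neg at hcon
  set n := Fintype.card B with hn
  have hbn : αB b ≤ -(n:ℤ) := by omega
  have hex : ∀ r : Fin n, ∃ b', αB b' = -(r:ℤ) := by
    intro r
    apply Hgap r
    exact ⟨b, by have := r.isLt; omega⟩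
  choose f hf using hex
  have hinj : Function.Injective (fun i : Fin (n+1) =>
      if h : (i : ℕ) < n then f ⟨i, h⟩ else b) := by
    intro i j hij
    simp only at hij
    split_ifs at hij with hi hj hj
    · have : ((⟨i, hi⟩ : Fin n) : ℤ) = ((⟨j, hj⟩ : Fin n) : ℤ) := by
        have h1 := hf ⟨i, hi⟩
        have h2 := hf ⟨j, hj⟩
        rw [hij] at h1
        omega
      ext
      simpa using this
    · exfalso
      have h1 := hf ⟨i, hi⟩
      rw [hij] at h1
      have : ((⟨i, hi⟩ : Fin n) : ℤ) < n := by exact_mod_cast hi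
      omega
    · exfalso
      have h1 := hf ⟨j, hj⟩
      rw [← hij] at h1
      have : ((⟨j, hj⟩ : Fin n) : ℤ) < n := by exact_mod_cast hj
      omega
    · ext
      omega
  have := Fintype.card_le_of_injective _ hinj
  simp [hn] at this
end

section
/- Let H = (V, E) be a graph and k a positive integer. Construct H' by adding, for each vertex v ∈ V, two new vertices v', v'' and edges (v,v') and (v,v''). Then H contains a clique of size k if and only if H' contains a cliquehog of size k, where a cliquehog of size k in a graph is a pair (C, F) with C a clique of size k and F a set of edges containing, for each c ∈ C, exactly two edges joining c to a vertex outside C. -/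
open Finset

/-- The graph `H'` obtained from `H` by adding, for each vertex `v`, two new
pendant vertices `v'` (in the first extra copy) and `v''` (in the second extra
copy) joined to `v`. -/
def augment {V : Type*} (H : SimpleGraph V) : SimpleGraph (V ⊕ V ⊕ V) :=
  SimpleGraph.fromRel (fun x y =>
    match x, y with
    | Sum.inl v, Sum.inl w => H.Adj v w
    | Sum.inl v, Sum.inr (Sum.inl w) => v = w
    | Sum.inl v, Sum.inr (Sum.inr w) => v = w
    | _, _ => False)

open scoped Classical in
/-- A cliquehog of size `k` in a graph `G`: a pair `(C, F)` where `C` is a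
clique of size `k` and `F` is a set of edges of `G` containing, for each
`c ∈ C`, exactly two edges joining `c` to a vertex outside `C`. -/
def IsCliquehog {V : Type*} (G : SimpleGraph V) (k : ℕ)
    (C : Finset V) (F : Finset (Sym2 V)) : Prop :=
  G.IsNClique k C ∧ (∀ e ∈ F, e ∈ G.edgeSet) ∧
    ∀ c ∈ C, (F.filter fun e => ∃ d, d ∉ C ∧ e = s(c, d)).card = 2

lemma aug_inl {V : Type*} (H : SimpleGraph V) (v w : V) :
    (augment H).Adj (Sum.inl v) (Sum.inl w) ↔ H.Adj v w := by
  simp only [augment, SimpleGraph.fromRel_adj]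
  constructor
  · rintro ⟨h1, h2 | h2⟩
    · exact h2
    · exact h2.symm
  · exact fun h => ⟨by simpa using h.ne, Or.inl h⟩

lemma aug_pend1 {V : Type*} (H : SimpleGraph V) (v : V) :
    (augment H).Adj (Sum.inl v) (Sum.inr (Sum.inl v)) := by
  simp [augment, SimpleGraph.fromRel_adj]

lemma aug_pend2 {V : Type*} (H : SimpleGraph V) (v : V) :
    (augment H).Adj (Sum.inl v) (Sum.inr (Sum.inr v)) := by
  simp [augment, SimpleGraph.fromRel_adj]

lemma aug_inr {V : Type*} (H : SimpleGraph V) (x : V ⊕ V) (d : V ⊕ V ⊕ V)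
    (h : (augment H).Adj (Sum.inr x) d) : d = Sum.inl (Sum.elim id id x) := by
  simp only [augment, SimpleGraph.fromRel_adj] at h
  obtain ⟨-, h | h⟩ := h
  · cases x <;> cases h
  · rcases d with v | (v | v) <;> rcases x with w | w <;> simp_all

/-- `H` contains a clique of size `k` iff the augmented graph
`H'` contains a cliquehog of size `k`. -/
theorem stmt12 {V : Type*} [Fintype V] [DecidableEq V]
    (H : SimpleGraph V) (k : ℕ) (hk : 0 < k) :
    (∃ C : Finset V, H.IsNClique k C) ↔
      ∃ (C : Finset (V ⊕ V ⊕ V)) (F : Finset (Sym2 (V ⊕ V ⊕ V))),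
        IsCliquehog (augment H) k C F := by
  classical
  constructor
  · rintro ⟨C, hC⟩
    refine ⟨C.image Sum.inl,
      C.biUnion (fun c => {s(Sum.inl c, Sum.inr (Sum.inl c)),
        s(Sum.inl c, Sum.inr (Sum.inr c))}), ?_, ?_, ?_⟩
    · constructor
      · rintro x hx y hy hxy
        simp only [coe_image, Set.mem_image, mem_coe] at hx hy
        obtain ⟨a, ha, rfl⟩ := hx
        obtain ⟨b, hb, rfl⟩ := hy
        exact (aug_inl H a b).mpr (hC.1 ha hb (by simpa using hxy))
      · rw [Finset.card_image_of_injective _ Sum.inl_injective, hC.2]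
    · intro e he
      simp only [mem_biUnion, mem_insert, mem_singleton] at he
      obtain ⟨b, -, rfl | rfl⟩ := he
      · exact aug_pend1 H b
      · exact aug_pend2 H b
    · intro c' hc'
      simp only [mem_image] at hc'
      obtain ⟨c, hc, rfl⟩ := hc'
      rw [Finset.card_eq_two]
      refine ⟨s(Sum.inl c, Sum.inr (Sum.inl c)), s(Sum.inl c, Sum.inr (Sum.inr c)),
        by simp [Sym2.eq_iff], ?_⟩
      ext e
      simp only [mem_filter, mem_biUnion, mem_insert, mem_singleton]
      constructor
      · rintro ⟨⟨b, hb, rfl | rfl⟩, d, hd, he⟩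
        · rw [Sym2.eq_iff] at he
          rcases he with ⟨h1, h2⟩ | ⟨h1, h2⟩
          · obtain rfl : b = c := Sum.inl_injective h1
            exact Or.inl rfl
          · exact absurd h2 (by simp)
        · rw [Sym2.eq_iff] at he
          rcases he with ⟨h1, h2⟩ | ⟨h1, h2⟩
          · obtain rfl : b = c := Sum.inl_injective h1
            exact Or.inr rfl
          · exact absurd h2 (by simp)
      · rintro (rfl | rfl)
        · exact ⟨⟨c, hc, Or.inl rfl⟩, Sum.inr (Sum.inl c), by simp, rfl⟩
        · exact ⟨⟨c, hc, Or.inr rfl⟩, Sum.inr (Sum.inr c), by simp, rfl⟩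
  · rintro ⟨C, F, hcl, hedge, hcount⟩
    have hall : ∀ x ∈ C, ∃ v, x = Sum.inl v := by
      intro x hx
      rcases x with v | y
      · exact ⟨v, rfl⟩
      · exfalso
        have h2 := hcount _ hx
        have h1 : 1 < _ := h2 ▸ (one_lt_two : (1:ℕ) < 2)
        obtain ⟨e1, he1, e2, he2, hne⟩ := Finset.one_lt_card.mp h1
        simp only [Finset.mem_filter] at he1 he2
        obtain ⟨hf1, d1, hd1, rfl⟩ := he1
        obtain ⟨hf2, d2, hd2, he2'⟩ := he2
        have a1 : (augment H).Adj (Sum.inr y) d1 :=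
          (SimpleGraph.mem_edgeSet (augment H)).mp (hedge _ hf1)
        have a2 : (augment H).Adj (Sum.inr y) d2 := by
          have h := hedge _ hf2
          rw [he2'] at h
          exact (SimpleGraph.mem_edgeSet (augment H)).mp h
        have hdd := (aug_inr H y d1 a1).trans (aug_inr H y d2 a2).symm
        exact hne (by rw [he2', hdd])
    refine ⟨univ.filter (fun v => Sum.inl v ∈ C), ?_⟩
    have hCeq : C = (univ.filter (fun v => Sum.inl v ∈ C)).image Sum.inl := by
      ext x
      simp only [mem_image, mem_filter, mem_univ, true_and]
      constructor
      · intro hx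
        obtain ⟨v, rfl⟩ := hall x hx
        exact ⟨v, hx, rfl⟩
      · rintro ⟨v, hv, rfl⟩
        exact hv
    constructor
    · intro a ha b hb hab
      have := hcl.1 (by rw [hCeq]; exact mem_coe.mpr (mem_image_of_mem _ ha))
        (by rw [hCeq]; exact mem_coe.mpr (mem_image_of_mem _ hb))
        (fun h => hab (Sum.inl_injective h))
      exact (aug_inl H a b).mp this
    · have := hcl.2
      rw [hCeq, Finset.card_image_of_injective _ Sum.inl_injective] at this
      exact this
end

section
/- Let D = (A, F) be a housing market (directed graph on agent set A, each agent endowed with a distinct house ω(a), with preferences over outgoing arcs), and let G_D be the bipartite graph with agents A and objects {ω(a) : a ∈ A}, edges {(a, ω(a')) : (a,a') ∈ F} ∪ {(a, ω(a)) : a ∈ A}, where each agent's preferences over objects come from its arc preferences and ω(a) is its unique worst choice. Then the map S ↦ M_S = {(a, ω(a')) : (a,a') ∈ S} ∪ {(a, ω(a)) : a does not trade in S} is a bijection between allocations in D and perfect matchings in G_D, and an allocation S is popular in D if and only if M_S is a popular assignment in G_D. -/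
open Finset

/-- An allocation in the housing market `D = (A, F)`, represented as a
bijection `σ : A → A` (its nontrivial cycles are the trading cycles): every
agent either keeps her own house or trades along an arc of `F`. -/
def IsAlloc {A : Type*} (F : A → A → Prop) (σ : A → A) : Prop :=
  Function.Bijective σ ∧ ∀ a, σ a = a ∨ F a (σ a)

/-- Agent `a` prefers allocation `σ` to allocation `σ'`: either `a` trades in
`σ` but not in `σ'`, or `a` trades in both and prefers the house obtained
in `σ`. -/
def prefAlloc {A : Type*} (pref : A → A → A → Prop) (a : A) (σ σ' : A → A) : Prop :=
  (σ a ≠ a ∧ σ' a = a) ∨ (σ a ≠ a ∧ σ' a ≠ a ∧ pref a (σ a) (σ' a))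

/-- `Δ(σ', σ)` for allocations: agents preferring `σ'` minus agents
preferring `σ`. -/
noncomputable def DeltaAlloc {A : Type*} [Fintype A] (pref : A → A → A → Prop)
    (σ' σ : A → A) : ℤ :=
  letI := Classical.propDecidable
  ((univ.filter fun a => prefAlloc pref a σ' σ).card : ℤ) -
    ((univ.filter fun a => prefAlloc pref a σ σ').card : ℤ)

/-- The preferences in the bipartite graph `G_D`: objects are houses
(identified with their owners); agent `a` prefers house `x` to house `y` iff
both are houses she is willing to trade for and she prefers `x`, or `x` is
acceptable and `y = ω(a)` is her own house (her unique worst choice). -/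
def prefGD {A : Type*} (F : A → A → Prop) (pref : A → A → A → Prop)
    (a x y : A) : Prop :=
  (F a x ∧ F a y ∧ pref a x y) ∨ (F a x ∧ y = a)

/-- For a housing market `D = (A, F)`, the map `S ↦ M_S`
(here the identity on bijections `A → A`, objects being identified with their
owners) is a bijection between allocations of `D` and perfect matchings of the
bipartite graph `G_D` with edges `{(a, ω(a')) : (a,a') ∈ F} ∪ {(a, ω(a))}`,
and an allocation is popular in `D` iff the corresponding assignment is a
popular assignment in `G_D`. -/
theorem stmt13 {A : Type*} [Fintype A]
    (F : A → A → Prop) (hirrF : ∀ a, ¬ F a a)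
    (pref : A → A → A → Prop)
    (hirr : ∀ a x, ¬ pref a x x)
    (htrans : ∀ a x y z, pref a x y → pref a y z → pref a x z)
    (hprefF : ∀ a x y, pref a x y → F a x ∧ F a y) :
    (∀ σ : A → A, IsAlloc F σ ↔ IsPM (fun a b => F a b ∨ b = a) σ) ∧
    (∀ σ : A → A, IsAlloc F σ →
      ((∀ σ', IsAlloc F σ' → DeltaAlloc pref σ' σ ≤ 0) ↔
       (∀ N, IsPM (fun a b => F a b ∨ b = a) N →
          Delta (prefGD F pref) N σ ≤ 0))) := by

  classical
  have equiv : ∀ σ : A → A, IsAlloc F σ ↔ IsPM (fun a b => F a b ∨ b = a) σ := by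
    intro σ
    constructor
    · rintro ⟨hb, h⟩; exact ⟨hb, fun a => (h a).symm⟩
    · rintro ⟨hb, h⟩; exact ⟨hb, fun a => (h a).symm⟩
  refine ⟨equiv, fun σ hσ => ?_⟩
  have hne : ∀ (τ : A → A), IsAlloc F τ → ∀ a, (τ a ≠ a ↔ F a (τ a)) := by
    intro τ hτ a
    constructor
    · intro h; rcases hτ.2 a with h' | h'
      · exact absurd h' h
      · exact h'
    · intro h h'; rw [h'] at h; exact hirrF a h
  have key : ∀ (τ τ' : A → A), IsAlloc F τ → IsAlloc F τ' → ∀ a,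
      prefAlloc pref a τ τ' ↔ prefGD F pref a (τ a) (τ' a) := by
    intro τ τ' hτ hτ' a
    unfold prefAlloc prefGD
    constructor
    · rintro (⟨h1, h2⟩ | ⟨h1, h2, h3⟩)
      · exact Or.inr ⟨(hne τ hτ a).1 h1, h2⟩
      · exact Or.inl ⟨(hne τ hτ a).1 h1, (hne τ' hτ' a).1 h2, h3⟩
    · rintro (⟨h1, h2, h3⟩ | ⟨h1, h2⟩)
      · exact Or.inr ⟨(hne τ hτ a).2 h1, (hne τ' hτ' a).2 h2, h3⟩
      · exact Or.inl ⟨(hne τ hτ a).2 h1, h2⟩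
  have hΔ : ∀ σ', IsAlloc F σ' →
      Delta (prefGD F pref) σ' σ = DeltaAlloc pref σ' σ := by
    intro σ' hσ'
    unfold Delta DeltaAlloc
    have e1 : (univ.filter fun a => prefGD F pref a (σ' a) (σ a)) =
        (univ.filter fun a => prefAlloc pref a σ' σ) :=
      Finset.filter_congr fun a _ => by simp only [(key σ' σ hσ' hσ a)]
    have e2 : (univ.filter fun a => prefGD F pref a (σ a) (σ' a)) =
        (univ.filter fun a => prefAlloc pref a σ σ') :=
      Finset.filter_congr fun a _ => by simp only [(key σ σ' hσ hσ' a)]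
    rw [e1, e2]
  constructor
  · intro h N hN
    have hN' := (equiv N).2 hN
    rw [hΔ N hN']
    exact h N hN'
  · intro h σ' hσ'
    rw [← hΔ σ' hσ']
    exact h σ' ((equiv σ').1 hσ')
end

section
/- Let G = (A ∪ B, E) be a bipartite instance with partial order preferences, let ℓ₁(b) = 0 for all b ∈ B, and define iteratively: given ℓ_i, let M_i be a maximum matching in G_{ℓ_i}, and if M_i is not perfect, set ℓ_{i+1}(b) = ℓ_i(b) + 1 for b unmatched by M_i and ℓ_{i+1}(b) = ℓ_i(b) otherwise. If M* is a popular assignment in G with dual certificate α, then for every iteration i and every b ∈ B, ℓ_i(b) ≤ |α_b|. -/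
open Finset

/-- Run the popular assignment algorithm: `ℓ 0 ≡ 0`, `Mseq i` is
a maximum matching of `G_{ℓ i}`, and levels of objects unmatched by `Mseq i`
are increased by one.  If `M*` is a popular assignment with dual certificate
`α`, then at every iteration `i` and for every object `b`, `ℓ i b ≤ |α_b|`. -/
theorem stmt14 {A B : Type*} [Fintype A] [Fintype B]
    (E : A → B → Prop) (pref : A → B → B → Prop)
    (hirr : ∀ a b, ¬ pref a b b)
    (htrans : ∀ a b₁ b₂ b₃, pref a b₁ b₂ → pref a b₂ b₃ → pref a b₁ b₃)
    (hprefE : ∀ a b b', pref a b b' → E a b ∧ E a b')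
    (Mstar : A → B) (hMstar : IsPM E Mstar)
    (αA : A → ℤ) (αB : B → ℤ)
    (hfeas : ∀ a b, E a b → αA a + αB b ≥ wt pref Mstar a b)
    (hAnn : ∀ a, 0 ≤ αA a) (hBnp : ∀ b, αB b ≤ 0)
    (hsum : ∑ a, αA a + ∑ b, αB b = 0)
    (ℓ : ℕ → B → ℕ) (Mseq : ℕ → A → Option B)
    (hℓ0 : ∀ b, ℓ 0 b = 0)
    (hmatch : ∀ i, IsMatching (inEll E pref (ℓ i)) (Mseq i))
    (hmax : ∀ i N, IsMatching (inEll E pref (ℓ i)) N → msize N ≤ msize (Mseq i))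
    (hkeep : ∀ i b, (∃ a, Mseq i a = some b) → ℓ (i + 1) b = ℓ i b)
    (hraise : ∀ i b, (¬ ∃ a, Mseq i a = some b) → ℓ (i + 1) b = ℓ i b + 1) :
    ∀ i b, (ℓ i b : ℤ) ≤ -αB b := by
  classical
  -- abbreviations: nonnegative integer versions of the duals
  set m : B → ℕ := fun b => (-αB b).toNat with hmdef
  set n : A → ℕ := fun a => (αA a).toNat with hndef
  have hm : ∀ b, (m b : ℤ) = -αB b := fun b => Int.toNat_of_nonneg (by linarith [hBnp b])
  have hn : ∀ a, (n a : ℤ) = αA a := fun a => Int.toNat_of_nonneg (hAnn a)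
  -- complementary slackness : αA a + αB (Mstar a) = 0
  have hCS : ∀ a, αA a + αB (Mstar a) = 0 := by
    have hnn : ∀ a ∈ (univ : Finset A), 0 ≤ αA a + αB (Mstar a) := by
      intro a _
      have h := hfeas a (Mstar a) (hMstar.2 a)
      have hw : wt pref Mstar a (Mstar a) = 0 := by
        unfold wt
        rw [if_neg (hirr a (Mstar a)), if_neg (hirr a (Mstar a))]
      rw [hw] at h; exact h
    have hsum' : ∑ a, (αA a + αB (Mstar a)) = 0 := by
      rw [Finset.sum_add_distrib, hMstar.1.sum_comp αB]
      exact hsum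
    intro a
    exact (Finset.sum_eq_zero_iff_of_nonneg hnn).1 hsum' a (mem_univ a)
  have hmn : ∀ a, m (Mstar a) = n a := by
    intro a
    have : (m (Mstar a) : ℤ) = (n a : ℤ) := by rw [hm, hn]; linarith [hCS a]
    exact_mod_cast this
  -- feasibility facts in ℕ
  have hF1 : ∀ a b, E a b → pref a b (Mstar a) → m b + 1 ≤ n a := by
    intro a b hE hp
    have h := hfeas a b hE
    have hw : wt pref Mstar a b = 1 := by unfold wt; rw [if_pos hp]
    rw [hw] at h
    have : (m b : ℤ) + 1 ≤ (n a : ℤ) := by rw [hm, hn]; linarith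
    exact_mod_cast this
  have hF2 : ∀ a b, E a b → ¬ pref a (Mstar a) b → m b ≤ n a := by
    intro a b hE hp
    have h := hfeas a b hE
    have hw : (0:ℤ) ≤ wt pref Mstar a b := by
      unfold wt
      rw [if_neg hp]
      split <;> norm_num
    have : (m b : ℤ) ≤ (n a : ℤ) := by rw [hm, hn]; linarith
    exact_mod_cast this
  have hF3 : ∀ a b, E a b → m b ≤ n a + 1 := by
    intro a b hE
    have h := hfeas a b hE
    have hw : (-1:ℤ) ≤ wt pref Mstar a b := by
      unfold wt; split
      · norm_num
      · split <;> norm_num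
    have : (m b : ℤ) ≤ (n a : ℤ) + 1 := by rw [hm, hn]; linarith
    exact_mod_cast this
  -- the key structural lemma
  have key : ∀ (lv : B → ℕ), (∀ b, lv b ≤ m b) → ∀ a, lv (Mstar a) = m (Mstar a) →
      inEll E pref lv a (Mstar a) ∧ ∀ b'', inEll E pref lv a b'' → lv b'' = m b'' := by
    intro lv hle a hb0
    have hEb : E a (Mstar a) := hMstar.2 a
    have hlb : lv (Mstar a) = n a := by rw [hb0, hmn]
    set L := lstar E lv a with hLdef
    have hLle : L ≤ n a + 1 := by
      apply Finset.sup_le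
      intro b' hb'
      have hE' : E a b' := by simpa using hb'
      exact le_trans (hle b') (hF3 a b' hE')
    have hLge : n a ≤ L := by
      have : lv (Mstar a) ≤ L := Finset.le_sup (by simpa using hEb)
      omega
    rcases (by omega : L = n a ∨ L = n a + 1) with h1 | h1
    · -- case L = n a : clause (i) edge
      constructor
      · refine ⟨hEb, Or.inl ⟨by omega, ?_⟩⟩
        intro b' hE' hl' hp
        have := hF1 a b' hE' hp
        have := hle b'
        omega
      · rintro b'' ⟨hE'', hcase | hcase⟩
        · obtain ⟨hl, hnp⟩ := hcase
          have h2 : ¬ pref a (Mstar a) b'' := hnp (Mstar a) hEb (by omega)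
          have := hF2 a b'' hE'' h2
          have := hle b''
          omega
        · obtain ⟨hl, hpp, _⟩ := hcase
          have h2 : pref a b'' (Mstar a) := hpp (Mstar a) hEb (by omega)
          have := hF1 a b'' hE'' h2
          have := hle b''
          omega
    · -- case L = n a + 1 : clause (ii) edge
      have hlevL : ∀ b', E a b' → lv b' = L → pref a (Mstar a) b' := by
        intro b' hE' hl'
        by_contra hnp
        have := hF2 a b' hE' hnp
        have := hle b'
        omega
      constructor
      · refine ⟨hEb, Or.inr ⟨by omega, hlevL, ?_⟩⟩
        intro b' hE' hl' hp
        have := hF1 a b' hE' hp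
        have := hle b'
        omega
      · rintro b'' ⟨hE'', hcase | hcase⟩
        · obtain ⟨hl, _⟩ := hcase
          have := hF3 a b'' hE''
          have := hle b''
          omega
        · obtain ⟨hl, _, hnp⟩ := hcase
          have h2 : ¬ pref a (Mstar a) b'' := hnp (Mstar a) hEb (by omega)
          have := hF2 a b'' hE'' h2
          have := hle b''
          omega
  -- counting argument : capped objects are matched
  have hcov : ∀ i, (∀ b, ℓ i b ≤ m b) → ∀ b, ℓ i b = m b → ∃ a, Mseq i a = some b := by
    intro i hle
    set lv := ℓ i with hlvdef
    set M := Mseq i with hMdef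
    set N : A → Option B := fun a =>
      if lv (Mstar a) = m (Mstar a) then some (Mstar a)
      else (M a).bind (fun b => if lv b = m b then none else some b) with hNdef
    have hNsome : ∀ a c, N a = some c →
        (lv (Mstar a) = m (Mstar a) ∧ c = Mstar a) ∨
        (¬ lv (Mstar a) = m (Mstar a) ∧ M a = some c ∧ ¬ lv c = m c) := by
      intro a c hc
      by_cases h : lv (Mstar a) = m (Mstar a)
      · left
        refine ⟨h, ?_⟩
        rw [hNdef] at hc; simp only [if_pos h] at hc
        exact (Option.some_inj.1 hc).symm
      · right
        rw [hNdef] at hc; simp only [if_neg h] at hc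
        rcases Option.bind_eq_some_iff.1 hc with ⟨b', hb', hif⟩
        by_cases h2 : lv b' = m b'
        · rw [if_pos h2] at hif; exact absurd hif (by simp)
        · rw [if_neg h2] at hif
          have : b' = c := Option.some_inj.1 hif
          subst this
          exact ⟨h, hb', h2⟩
    have hNmatch : IsMatching (inEll E pref lv) N := by
      constructor
      · intro a b hab
        rcases hNsome a b hab with ⟨h, rfl⟩ | ⟨_, hM, _⟩
        · exact (key lv hle a h).1
        · exact (hmatch i).1 a b hM
      · intro a a' c ha ha'
        rcases hNsome a c ha with ⟨h, rfl⟩ | ⟨h, hM, hc⟩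
        · rcases hNsome a' (Mstar a) ha' with ⟨h', he⟩ | ⟨h', hM', hc'⟩
          · exact hMstar.1.1 he
          · exact absurd h hc'
        · rcases hNsome a' c ha' with ⟨h', he⟩ | ⟨h', hM', hc'⟩
          · exact absurd (he ▸ h') hc
          · exact (hmatch i).2 a a' c hM hM'
    -- the finsets
    set B0 : Finset B := univ.filter (fun b => lv b = m b) with hB0
    set A0 : Finset A := univ.filter (fun a => lv (Mstar a) = m (Mstar a)) with hA0
    set S1 : Finset A := univ.filter (fun a => ∃ b, M a = some b ∧ lv b = m b) with hS1
    set S2 : Finset A := univ.filter (fun a => ∃ b, M a = some b ∧ ¬ lv b = m b) with hS2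
    -- |A0| = |B0|
    have hA0B0 : A0.card = B0.card := by
      apply Finset.card_bij (fun a _ => Mstar a)
      · intro a ha
        simp only [hA0, mem_filter, mem_univ, true_and] at ha
        simp only [hB0, mem_filter, mem_univ, true_and]
        exact ha
      · intro a₁ _ a₂ _ h
        exact hMstar.1.1 h
      · intro b hb
        obtain ⟨a, rfl⟩ := hMstar.1.2 b
        simp only [hB0, mem_filter, mem_univ, true_and] at hb
        exact ⟨a, by simp [hA0, hb], rfl⟩
    -- msize M = |S1| + |S2|
    have hMsize : msize M = S1.card + S2.card := by
      have hdisj : Disjoint S1 S2 := by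
        rw [Finset.disjoint_left]
        intro a ha ha'
        simp only [hS1, mem_filter, mem_univ, true_and] at ha
        simp only [hS2, mem_filter, mem_univ, true_and] at ha'
        obtain ⟨b, hb, h1⟩ := ha
        obtain ⟨b', hb', h2⟩ := ha'
        rw [hb] at hb'
        exact h2 (Option.some_inj.1 hb' ▸ h1)
      rw [← Finset.card_union_of_disjoint hdisj]
      unfold msize
      congr 1
      ext a
      simp only [hS1, hS2, mem_union, mem_filter, mem_univ, true_and]
      constructor
      · intro h
        rcases Option.isSome_iff_exists.1 h with ⟨b, hb⟩
        by_cases hbl : lv b = m b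
        · exact Or.inl ⟨b, hb, hbl⟩
        · exact Or.inr ⟨b, hb, hbl⟩
      · rintro (⟨b, hb, _⟩ | ⟨b, hb, _⟩) <;> simp [hb]
    -- msize N = |A0| + |S2|
    have hNsize : msize N = A0.card + S2.card := by
      have hdisj : Disjoint A0 S2 := by
        rw [Finset.disjoint_left]
        intro a ha ha'
        simp only [hA0, mem_filter, mem_univ, true_and] at ha
        simp only [hS2, mem_filter, mem_univ, true_and] at ha'
        obtain ⟨b, hb, h2⟩ := ha'
        exact h2 ((key lv hle a ha).2 b ((hmatch i).1 a b hb))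
      rw [← Finset.card_union_of_disjoint hdisj]
      unfold msize
      congr 1
      ext a
      simp only [mem_union, hA0, hS2, mem_filter, mem_univ, true_and]
      constructor
      · intro h
        rcases Option.isSome_iff_exists.1 h with ⟨c, hc⟩
        rcases hNsome a c hc with ⟨h1, _⟩ | ⟨_, hM', h2⟩
        · exact Or.inl h1
        · exact Or.inr ⟨c, hM', h2⟩
      · rintro (h | ⟨b, hb, hbl⟩)
        · rw [hNdef]; simp [h]
        · rw [hNdef]
          by_cases h : lv (Mstar a) = m (Mstar a)
          · simp [h]
          · simp [h, hb, hbl]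
    -- the injection from S1 to B0
    have hfmap : ∀ a ∈ S1, ∃ b, M a = some b ∧ b ∈ B0 := by
      intro a ha
      simp only [hS1, mem_filter, mem_univ, true_and] at ha
      obtain ⟨b, hb, h1⟩ := ha
      exact ⟨b, hb, by simp [hB0, h1]⟩
    set f : A → B := fun a => (M a).getD (Mstar a) with hf
    have hfval : ∀ a b, M a = some b → f a = b := by
      intro a b hb; rw [hf]; simp [hb]
    have hfS1 : ∀ a ∈ S1, f a ∈ B0 := by
      intro a ha
      obtain ⟨b, hb, hbB⟩ := hfmap a ha
      rw [hfval a b hb]; exact hbB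
    have hfinj : Set.InjOn f ↑S1 := by
      intro a ha a' ha' hff
      obtain ⟨b, hb, _⟩ := hfmap a (by simpa using ha)
      obtain ⟨b', hb', _⟩ := hfmap a' (by simpa using ha')
      rw [hfval a b hb, hfval a' b' hb'] at hff
      subst hff
      exact (hmatch i).2 a a' b hb hb'
    have hS1le : S1.card ≤ B0.card := Finset.card_le_card_of_injOn f hfS1 hfinj
    -- maximality forces |S1| = |B0|
    have hle2 : msize N ≤ msize M := hmax i N hNmatch
    have hS1eq : S1.card = B0.card := by omega
    -- surjectivity of f : S1 → B0
    have himg : S1.image f = B0 := by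
      apply Finset.eq_of_subset_of_card_le
      · intro b hb
        rcases Finset.mem_image.1 hb with ⟨a, ha, rfl⟩
        exact hfS1 a ha
      · rw [Finset.card_image_of_injOn hfinj, hS1eq]
    intro b hbcap
    have hbB0 : b ∈ B0 := by simp [hB0, hbcap]
    rw [← himg] at hbB0
    rcases Finset.mem_image.1 hbB0 with ⟨a, ha, hfa⟩
    obtain ⟨b', hb', _⟩ := hfmap a ha
    rw [hfval a b' hb'] at hfa
    exact ⟨a, hfa ▸ hb'⟩
  -- main induction on i
  intro i
  induction i with
  | zero =>
    intro b
    rw [hℓ0 b]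
    simpa using hBnp b
  | succ i ih =>
    have hle : ∀ b, ℓ i b ≤ m b := by
      intro b
      have h := ih b
      have : (ℓ i b : ℤ) ≤ (m b : ℤ) := by rw [hm]; exact h
      exact_mod_cast this
    intro b
    by_cases hb : ∃ a, Mseq i a = some b
    · rw [hkeep i b hb]; exact ih b
    · rw [hraise i b hb]
      have h1 : ℓ i b ≤ m b := hle b
      have h2 : ℓ i b ≠ m b := fun h => hb (hcov i hle b h)
      have h3 : ℓ i b + 1 ≤ m b := by omega
      have : ((ℓ i b + 1 : ℕ) : ℤ) ≤ (m b : ℤ) := by exact_mod_cast h3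
      rw [hm] at this
      push_cast at this ⊢
      linarith
end

section
/- Let G = (A ∪ B, E) be a bipartite instance with partial order preferences and M a perfect matching of G that is popular with penalty κ (compared against all matchings of G, with unmatched-agent votes weighted by κ). Then M admits a dual certificate α with α_b ≥ -κ for every object b ∈ B. -/
open Finset

namespace Stmt15Aux

variable {A : Type*}

/-- predecessor of `y` in list `l` (first occurrence in the tail). -/
def prevIn [DecidableEq A] : List A → A → Option A
  | a :: b :: t, y => if y = b then some a else prevIn (b :: t) y
  | _, _ => none

/-- weight of a walk. -/
def wsum (w : A → A → ℤ) : List A → ℤ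
  | a :: b :: t => w a b + wsum w (b :: t)
  | _ => 0

theorem prevIn_eq_some [DecidableEq A] : ∀ {l : List A} {y x : A},
    prevIn l y = some x → ∃ u v, l = u ++ x :: y :: v := by
  intro l
  induction l with
  | nil => intro y x h; simp [prevIn] at h
  | cons a t ih =>
    intro y x h
    match t with
    | [] => simp [prevIn] at h
    | b :: t' =>
      by_cases hyb : y = b
      · subst hyb
        simp [prevIn] at h
        exact ⟨[], t', by simp [h]⟩
      · rw [prevIn, if_neg hyb] at h
        obtain ⟨u, v, huv⟩ := ih h
        exact ⟨a :: u, v, by simp [huv]⟩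

theorem prevIn_mem_tail [DecidableEq A] {l : List A} {y x : A}
    (h : prevIn l y = some x) : y ∈ l.tail ∧ x ∈ l := by
  obtain ⟨u, v, rfl⟩ := prevIn_eq_some h
  constructor
  · match u with
    | [] => simp
    | a :: u' => simp
  · simp

theorem prevIn_ne_getLast [DecidableEq A] {l : List A} {y x : A} (hn : l.Nodup)
    (h : prevIn l y = some x) (hne : l ≠ []) : x ≠ l.getLast hne := by
  obtain ⟨u, v, rfl⟩ := prevIn_eq_some h
  have h1 : (u ++ x :: y :: v).getLast hne = (x :: y :: v).getLast (by simp) := by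
    rw [List.getLast_append_of_ne_nil _ (by simp)]
  rw [h1]
  have h2 : (x :: y :: v).getLast (by simp) ∈ y :: v := by
    rw [List.getLast_cons (by simp)]
    exact List.getLast_mem _
  intro hx
  rw [← hx] at h2
  have hxy : ¬ x = y ∧ x ∉ v := by
    have := hn
    simp [List.nodup_append] at this
    tauto
  rcases List.mem_cons.1 h2 with h3 | h3
  · exact hxy.1 h3
  · exact hxy.2 h3

end Stmt15Aux

namespace Stmt15Aux
variable {A : Type*}

theorem prevIn_isSome_of_mem_tail [DecidableEq A] : ∀ {l : List A} {y : A},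
    y ∈ l.tail → (prevIn l y).isSome := by
  intro l
  induction l with
  | nil => simp
  | cons a t ih =>
    intro y hy
    match t with
    | [] => simp at hy
    | b :: t' =>
      by_cases hyb : y = b
      · simp [prevIn, hyb]
      · rw [prevIn, if_neg hyb]
        apply ih
        simp at hy
        rcases hy with h | h
        · exact absurd h hyb
        · exact h

theorem prevIn_inj [DecidableEq A] : ∀ {l : List A} {y y' x : A}, l.Nodup →
    prevIn l y = some x → prevIn l y' = some x → y = y' := by
  intro l
  induction l with
  | nil => intro y y' x _ h; simp [prevIn] at h
  | cons a t ih =>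
    intro y y' x hn h h'
    match t with
    | [] => simp [prevIn] at h
    | b :: t' =>
      by_cases hyb : y = b <;> by_cases hyb' : y' = b
      · rw [hyb, hyb']
      · exfalso
        rw [prevIn, if_pos hyb] at h
        rw [prevIn, if_neg hyb'] at h'
        obtain ⟨_, hx⟩ := prevIn_mem_tail h'
        have hxa : a = x := Option.some.inj h
        rw [← hxa] at hx
        exact (List.nodup_cons.1 hn).1 hx
      · exfalso
        rw [prevIn, if_pos hyb'] at h'
        rw [prevIn, if_neg hyb] at h
        obtain ⟨_, hx⟩ := prevIn_mem_tail h
        have hxa : a = x := Option.some.inj h'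
        rw [← hxa] at hx
        exact (List.nodup_cons.1 hn).1 hx
      · rw [prevIn, if_neg hyb] at h
        rw [prevIn, if_neg hyb'] at h'
        exact ih (List.nodup_cons.1 hn).2 h h'

theorem prevIn_cons_of_ne_head [DecidableEq A] {a y : A} {l : List A}
    (hy : ∀ c, l.head? = some c → y ≠ c) : prevIn (a :: l) y = prevIn l y := by
  match l with
  | [] => simp [prevIn]
  | b :: t => rw [prevIn, if_neg (hy b rfl)]

theorem chain'_prevIn [DecidableEq A] : ∀ {l : List A}, l.Nodup →
    List.Chain' (fun x y => prevIn l y = some x) l := by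
  intro l
  induction l with
  | nil => exact fun _ => List.isChain_nil
  | cons a t ih =>
    intro hn
    match t with
    | [] => exact List.isChain_singleton _
    | b :: t' =>
      rw [List.Chain', List.isChain_cons_cons]
      refine ⟨by simp [prevIn], ?_⟩
      have h2 := ih (List.nodup_cons.1 hn).2
      refine List.IsChain.imp ?_ h2
      intro x y hxy
      have hyt : y ∈ t' := (prevIn_mem_tail hxy).1
      have hyb : y ≠ b := by
        intro h; rw [h] at hyt
        exact (List.nodup_cons.1 (List.nodup_cons.1 hn).2).1 hyt
      rw [prevIn, if_neg hyb]
      exact hxy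

end Stmt15Aux

namespace Stmt15Aux
variable {A : Type*} {w : A → A → ℤ}

theorem wsum_append : ∀ (u : List A) (x : A) (v : List A),
    wsum w (u ++ x :: v) = wsum w (u ++ [x]) + wsum w (x :: v) := by
  intro u
  induction u with
  | nil => intro x v; simp [wsum]
  | cons a u' ih =>
    intro x v
    match u' with
    | [] => simp [wsum]
    | b :: u'' =>
      have h1 : wsum w ((a :: b :: u'') ++ x :: v) = w a b + wsum w ((b :: u'') ++ x :: v) := rfl
      have h2 : wsum w ((a :: b :: u'') ++ [x]) = w a b + wsum w ((b :: u'') ++ [x]) := rfl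
      rw [h1, h2, ih]; ring

theorem wsum_concat : ∀ (u : List A) (hu : u ≠ []) (y : A),
    wsum w (u ++ [y]) = wsum w u + w (u.getLast hu) y := by
  intro u
  induction u with
  | nil => simp
  | cons a u' ih =>
    intro _ y
    match u' with
    | [] => simp [wsum]
    | b :: u'' =>
      have h1 : wsum w ((a :: b :: u'') ++ [y]) = w a b + wsum w ((b :: u'') ++ [y]) := rfl
      rw [h1, ih (by simp)]
      have h2 : (a :: b :: u'').getLast (by simp) = (b :: u'').getLast (by simp) :=
        List.getLast_cons (by simp)
      rw [h2]
      have h3 : wsum w (a :: b :: u'') = w a b + wsum w (b :: u'') := rfl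
      rw [h3]; ring

/-- sum of g over a list whose consecutive pairs satisfy `g y = w x y`. -/
theorem map_sum_chain (g : A → ℤ) : ∀ (t : List A) (a : A),
    List.Chain' (fun x y => g y = w x y) (a :: t) →
    ((a :: t).map g).sum = g a + wsum w (a :: t) := by
  intro t
  induction t with
  | nil => simp [wsum]
  | cons b t' ih =>
    intro a hc
    rw [List.Chain', List.isChain_cons_cons] at hc
    have h1 : ((a :: b :: t').map g).sum = g a + ((b :: t').map g).sum := by simp
    rw [h1, ih b hc.2]
    have h3 : wsum w (a :: b :: t') = w a b + wsum w (b :: t') := rfl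
    rw [h3, hc.1]

theorem exists_dup_decomp [DecidableEq A] : ∀ {l : List A}, ¬ l.Nodup →
    ∃ (s₁ : List A) (x : A) (s₂ s₃ : List A), l = s₁ ++ x :: s₂ ++ x :: s₃ := by
  intro l
  induction l with
  | nil => intro h; exact absurd List.nodup_nil h
  | cons a t ih =>
    intro h
    rw [List.nodup_cons] at h
    push_neg at h
    by_cases ha : a ∈ t
    · obtain ⟨s₂, s₃, rfl⟩ := List.append_of_mem ha
      exact ⟨[], a, s₂, s₃, rfl⟩
    · obtain ⟨s₁, x, s₂, s₃, rfl⟩ := ih (h ha)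
      exact ⟨a :: s₁, x, s₂, s₃, rfl⟩


theorem chain'_rel_of_prevIn {R : A → A → Prop} [DecidableEq A] {l : List A} {y x : A}
    (hc : List.Chain' R l) (h : prevIn l y = some x) : R x y := by
  obtain ⟨u, v, rfl⟩ := prevIn_eq_some h
  have := (List.isChain_append.1 hc).2.1
  exact (List.isChain_cons_cons.1 this).1

theorem head?_append_cons : ∀ (u : List A) (x : A) (v : List A),
    (u ++ x :: v).head? = some (u.headD x) := by
  intro u x v; cases u <;> simp

theorem getLast?_append_cons : ∀ (u : List A) (x : A) (v : List A),
    (u ++ x :: v).getLast? = (x :: v).getLast? := by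
  intro u
  induction u with
  | nil => intro x v; rfl
  | cons a u' ih =>
    intro x v
    match u' with
    | [] => exact List.getLast?_cons_cons ..
    | b :: u'' =>
      show (a :: b :: (u'' ++ x :: v)).getLast? = (x :: v).getLast?
      rw [List.getLast?_cons_cons]
      exact ih x v

theorem prevIn_eq_none_head [DecidableEq A] {l : List A} {a : A}
    (hn : l.Nodup) (hh : l.head? = some a) : prevIn l a = none := by
  cases hpa : prevIn l a with
  | none => rfl
  | some x =>
    exfalso
    have h1 := (prevIn_mem_tail hpa).1
    match l, hh with
    | b :: t, hh =>
      have : b = a := by simpa using hh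
      subst this
      exact (List.nodup_cons.1 hn).1 (by simpa using h1)

theorem eq_head_of_prevIn_none [DecidableEq A] {l : List A} {a a0 : A}
    (hh : l.head? = some a0) (hmem : a ∈ l) (hpa : prevIn l a = none) : a = a0 := by
  match l, hh with
  | b :: t, hh =>
    have hb : b = a0 := by simpa using hh
    subst hb
    rcases List.mem_cons.1 hmem with h | h
    · exact h
    · have := prevIn_isSome_of_mem_tail (l := b :: t) (by simpa using h)
      rw [hpa] at this; simp at this

end Stmt15Aux

namespace Stmt15Aux
section Main

variable {A B : Type*} [Fintype A] [Fintype B]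
variable (E : A → B → Prop) (pref : A → B → B → Prop) (κ : ℤ) (M : A → B)

theorem pop_sigma (hM : IsPM E M)
    (hpop : ∀ N, IsMatching E N →
      ∑ a, vote κ pref N (fun a => some (M a)) a ≤ 0)
    (σ : A → Option A)
    (hinj : ∀ a a' x, σ a = some x → σ a' = some x → a = a')
    (hedge : ∀ a x, σ a = some x → E a (M x)) :
    ∑ a, (σ a).elim (-κ) (fun x => wt pref M a (M x)) ≤ 0 := by
  classical
  set N : A → Option B := fun a => (σ a).map M with hN
  have hmatch : IsMatching E N := by
    constructor
    · intro a b hb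
      rw [hN] at hb
      simp only [Option.map_eq_some_iff] at hb
      obtain ⟨x, hx, rfl⟩ := hb
      exact hedge a x hx
    · intro a a' b ha ha'
      simp only [hN, Option.map_eq_some_iff] at ha ha'
      obtain ⟨x, hx, hxb⟩ := ha
      obtain ⟨x', hx', hxb'⟩ := ha'
      have : x = x' := hM.1.1 (hxb.trans hxb'.symm)
      exact hinj a a' x hx (this ▸ hx')
  have := hpop N hmatch
  refine le_trans (le_of_eq ?_) this
  apply Finset.sum_congr rfl
  intro a _
  cases hx : σ a with
  | none =>
    have hNa : N a = none := by simp [hN, hx]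
    simp [vote, hNa]
  | some x =>
    have hNa : N a = some (M x) := by simp [hN, hx]
    simp [vote, hNa, wt, hx]

set_option linter.unusedSectionVars false

theorem path_le (hirr : ∀ a b, ¬ pref a b b) (hM : IsPM E M)
    (hpop : ∀ N, IsMatching E N →
      ∑ a, vote κ pref N (fun a => some (M a)) a ≤ 0)
    (hκ : 1 ≤ κ)
    (l : List A) (hnd : l.Nodup)
    (hc : List.Chain' (fun a' a => E a (M a')) l) :
    wsum (fun a' a => wt pref M a (M a')) l ≤ κ := by
  classical
  set w : A → A → ℤ := fun a' a => wt pref M a (M a') with hw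
  match l, hnd, hc with
  | [], _, _ => simpa [wsum] using by linarith
  | a0 :: t, hnd, hc =>
    set l : List A := a0 :: t with hl
    set σ : A → Option A :=
      fun a => Option.elim (prevIn l a) (if a ∈ l then none else some a) some with hσ
    have hσ_some : ∀ a x, prevIn l a = some x → σ a = some x := by
      intro a x h; simp [hσ, h]
    have hσ_head : σ a0 = none := by
      have : prevIn l a0 = none := prevIn_eq_none_head hnd rfl
      have hmem : a0 ∈ l := by simp [hl]
      simp [hσ, this, hmem]
    have hσ_out : ∀ a, a ∉ l → σ a = some a := by
      intro a ha
      have : prevIn l a = none := by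
        cases hpa : prevIn l a with
        | none => rfl
        | some x => exact absurd (List.mem_of_mem_tail (prevIn_mem_tail hpa).1) ha
      simp [hσ, this, ha]
    have hσ_char : ∀ a x, σ a = some x →
        prevIn l a = some x ∨ (a ∉ l ∧ x = a) := by
      intro a x h
      cases hpa : prevIn l a with
      | some y =>
        left
        have h2 : y = x := by simpa [hσ, hpa] using h
        exact congrArg some h2
      | none =>
        by_cases hal : a ∈ l
        · simp [hσ, hpa, hal] at h
        · simp [hσ, hpa, hal] at h
          exact Or.inr ⟨hal, h.symm⟩
    have hinj : ∀ a a' x, σ a = some x → σ a' = some x → a = a' := by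
      intro a a' x ha ha'
      rcases hσ_char a x ha with h1 | ⟨h1, rfl⟩ <;>
        rcases hσ_char a' x ha' with h2 | ⟨h2, h3⟩
      · exact prevIn_inj hnd h1 h2
      · exact absurd (h3 ▸ (prevIn_mem_tail h1).2) h2
      · exact absurd (prevIn_mem_tail h2).2 h1
      · exact h3
    have hedge : ∀ a x, σ a = some x → E a (M x) := by
      intro a x ha
      rcases hσ_char a x ha with h1 | ⟨h1, rfl⟩
      · exact chain'_rel_of_prevIn hc h1
      · exact hM.2 _
    have hs := pop_sigma E pref κ M hM hpop σ hinj hedge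
    set g : A → ℤ := fun a => (σ a).elim (-κ) (fun x => wt pref M a (M x)) with hg
    have hout : ∀ a, a ∉ l → g a = 0 := by
      intro a ha
      simp [hg, hσ_out a ha, wt, hirr a (M a)]
    have h1 : ∑ a, g a = l.toFinset.sum g := by
      refine (Finset.sum_subset (Finset.subset_univ _) ?_).symm
      intro a _ ha
      exact hout a (by simpa using ha)
    have h2 : l.toFinset.sum g = (l.map g).sum := List.sum_toFinset g hnd
    have hchain : List.Chain' (fun x y => g y = w x y) l := by
      refine List.IsChain.imp ?_ (chain'_prevIn hnd)
      intro x y hxy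
      simp [hg, hσ_some y x hxy, hw]
    have h3 : (l.map g).sum = g a0 + wsum w l := map_sum_chain g t a0 hchain
    have h4 : g a0 = -κ := by simp [hg, hσ_head]
    rw [h1, h2, h3, h4] at hs
    linarith

theorem cycle_le (hirr : ∀ a b, ¬ pref a b b) (hM : IsPM E M)
    (hpop : ∀ N, IsMatching E N →
      ∑ a, vote κ pref N (fun a => some (M a)) a ≤ 0)
    (l : List A) (a0 gl : A) (hnd : l.Nodup)
    (hh : l.head? = some a0) (hgl : l.getLast? = some gl)
    (hc : List.Chain' (fun a' a => E a (M a')) l)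
    (hcl : E a0 (M gl)) :
    wsum (fun a' a => wt pref M a (M a')) l + wt pref M a0 (M gl) ≤ 0 := by
  classical
  set w : A → A → ℤ := fun a' a => wt pref M a (M a') with hw
  have hne : l ≠ [] := by intro h; rw [h] at hh; simp at hh
  have hgl' : l.getLast hne = gl := by
    rw [List.getLast?_eq_getLast hne] at hgl
    exact Option.some.inj hgl
  have hglmem : gl ∈ l := hgl' ▸ List.getLast_mem hne
  have ha0mem : a0 ∈ l := by
    match l, hh with
    | b :: t, hh => have : b = a0 := by simpa using hh
                    simp [← this]
  set σ : A → Option A :=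
    fun a => Option.elim (prevIn l a) (if a ∈ l then some gl else some a) some with hσ
  have hσ_some : ∀ a x, prevIn l a = some x → σ a = some x := by
    intro a x h; simp [hσ, h]
  have hσ_head : σ a0 = some gl := by
    have h1 : prevIn l a0 = none := prevIn_eq_none_head hnd hh
    simp [hσ, h1, ha0mem]
  have hσ_char : ∀ a x, σ a = some x →
      prevIn l a = some x ∨ (a = a0 ∧ x = gl) ∨ (a ∉ l ∧ x = a) := by
    intro a x h
    cases hpa : prevIn l a with
    | some y =>
      left
      have h2 : y = x := by simpa [hσ, hpa] using h
      exact congrArg some h2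
    | none =>
      by_cases hal : a ∈ l
      · have h2 : gl = x := by simpa [hσ, hpa, hal] using h
        exact Or.inr (Or.inl ⟨eq_head_of_prevIn_none hh hal hpa, h2.symm⟩)
      · have h2 : a = x := by simpa [hσ, hpa, hal] using h
        exact Or.inr (Or.inr ⟨hal, h2.symm⟩)
  have hinj : ∀ a a' x, σ a = some x → σ a' = some x → a = a' := by
    intro a a' x ha ha'
    rcases hσ_char a x ha with h1 | ⟨h1, h1'⟩ | ⟨h1, h1'⟩ <;>
      rcases hσ_char a' x ha' with h2 | ⟨h2, h2'⟩ | ⟨h2, h2'⟩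
    · exact prevIn_inj hnd h1 h2
    · exact absurd (h2' ▸ hgl'.symm) (prevIn_ne_getLast hnd h1 hne)
    · exact absurd (h2' ▸ (prevIn_mem_tail h1).2) h2
    · exact absurd (h1' ▸ hgl'.symm) (prevIn_ne_getLast hnd h2 hne)
    · exact h1.trans h2.symm
    · exact absurd (h2' ▸ (h1' ▸ hglmem)) h2
    · exact absurd (h1' ▸ (prevIn_mem_tail h2).2) h1
    · exact absurd (h1' ▸ (h2' ▸ hglmem)) h1
    · exact (h1'.symm).trans h2'
  have hedge : ∀ a x, σ a = some x → E a (M x) := by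
    intro a x ha
    rcases hσ_char a x ha with h1 | ⟨h1, h1'⟩ | ⟨h1, h1'⟩
    · exact chain'_rel_of_prevIn hc h1
    · rw [h1, h1']; exact hcl
    · rw [h1']; exact hM.2 a
  have hs := pop_sigma E pref κ M hM hpop σ hinj hedge
  set g : A → ℤ := fun a => (σ a).elim (-κ) (fun x => wt pref M a (M x)) with hg
  have hσ_out : ∀ a, a ∉ l → σ a = some a := by
    intro a ha
    have hpa : prevIn l a = none := by
      cases hpa : prevIn l a with
      | none => rfl
      | some x => exact absurd (List.mem_of_mem_tail (prevIn_mem_tail hpa).1) ha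
    simp [hσ, hpa, ha]
  have hout : ∀ a, a ∉ l → g a = 0 := by
    intro a ha
    simp [hg, hσ_out a ha, wt, hirr a (M a)]
  have h1 : ∑ a, g a = l.toFinset.sum g := by
    refine (Finset.sum_subset (Finset.subset_univ _) ?_).symm
    intro a _ ha
    exact hout a (by simpa using ha)
  have h2 : l.toFinset.sum g = (l.map g).sum := List.sum_toFinset g hnd
  have hchain : List.Chain' (fun x y => g y = w x y) l := by
    refine List.IsChain.imp ?_ (chain'_prevIn hnd)
    intro x y hxy
    simp [hg, hσ_some y x hxy, hw]
  have h4 : g a0 = wt pref M a0 (M gl) := by simp [hg, hσ_head]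
  match l, hh, hnd, hchain, hne, h1, h2 with
  | a1 :: t, hh, hnd, hchain, hne, h1, h2 =>
    have ha1 : a1 = a0 := by simpa using hh
    subst ha1
    have h3 : ((a1 :: t).map g).sum = g a1 + wsum w (a1 :: t) :=
      map_sum_chain g t a1 hchain
    rw [h1, h2, h3, h4] at hs
    linarith

theorem closed_walk_le (hirr : ∀ a b, ¬ pref a b b) (hM : IsPM E M)
    (hpop : ∀ N, IsMatching E N →
      ∑ a, vote κ pref N (fun a => some (M a)) a ≤ 0) :
    ∀ (n : ℕ) (l : List A) (a0 gl : A), l.length ≤ n →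
      l.head? = some a0 → l.getLast? = some gl →
      List.Chain' (fun a' a => E a (M a')) l → E a0 (M gl) →
      wsum (fun a' a => wt pref M a (M a')) l + wt pref M a0 (M gl) ≤ 0 := by
  classical
  intro n
  induction n using Nat.strong_induction_on with
  | _ n ih =>
  intro l a0 gl hlen hh hgl hc hcl
  by_cases hnd : l.Nodup
  · exact cycle_le E pref κ M hirr hM hpop l a0 gl hnd hh hgl hc hcl
  · obtain ⟨s₁, x, s₂, s₃, rfl⟩ := exists_dup_decomp hnd
    obtain ⟨hcA, hcB, hglue⟩ := List.isChain_append.1 hc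
    obtain ⟨hcA1, hcA2, hglue1⟩ := List.isChain_append.1 hcA
    set gl₂ : A := (x :: s₂).getLast (by simp) with hgl₂def
    have hgl₂some : (x :: s₂).getLast? = some gl₂ :=
      List.getLast?_eq_getLast (by simp)
    have hgl₂u : (s₁ ++ x :: s₂).getLast? = some gl₂ := by
      rw [getLast?_append_cons]; exact hgl₂some
    have hAdj : E x (M gl₂) := hglue gl₂ hgl₂u x rfl
    -- head computation
    have hh' : (s₁ ++ x :: (s₂ ++ x :: s₃)).head? = some a0 := by
      rw [← List.cons_append, ← List.append_assoc]; exact hh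
    rw [head?_append_cons] at hh'
    have ha0 : s₁.headD x = a0 := Option.some.inj hh'
    have hhead' : (s₁ ++ x :: s₃).head? = some a0 := by
      rw [head?_append_cons, ha0]
    -- getLast computation
    have hgl3 : (x :: s₃).getLast? = some gl := by
      rw [getLast?_append_cons] at hgl; exact hgl
    have hgl' : (s₁ ++ x :: s₃).getLast? = some gl := by
      rw [getLast?_append_cons]; exact hgl3
    -- chain for remainder
    have hc' : List.Chain' (fun a' a => E a (M a')) (s₁ ++ x :: s₃) := by
      refine List.isChain_append.2 ⟨hcA1, hcB, ?_⟩
      intro p hp q hq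
      have hq' : x = q := by simpa using hq
      rw [← hq']
      exact hglue1 p hp x rfl
    -- lengths
    have hlen' : (s₁ ++ x :: s₃).length < n := by
      simp only [List.length_append, List.length_cons] at hlen ⊢
      omega
    have hlen₂ : (x :: s₂).length < n := by
      simp only [List.length_append, List.length_cons] at hlen ⊢
      omega
    -- recursive calls
    have R1 := ih _ hlen₂ (x :: s₂) x gl₂ le_rfl rfl hgl₂some hcA2 hAdj
    have R2 := ih _ hlen' (s₁ ++ x :: s₃) a0 gl le_rfl hhead' hgl' hc' hcl
    -- weight identities
    set w : A → A → ℤ := fun a' a => wt pref M a (M a') with hw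
    have hne₁ : s₁ ++ x :: s₂ ≠ [] := by simp
    have hgetLast_eq : (s₁ ++ x :: s₂).getLast hne₁ = gl₂ := by
      have := List.getLast?_eq_getLast hne₁
      rw [this] at hgl₂u
      exact Option.some.inj hgl₂u
    have e1 : wsum w ((s₁ ++ x :: s₂) ++ x :: s₃)
        = wsum w ((s₁ ++ x :: s₂) ++ [x]) + wsum w (x :: s₃) :=
      wsum_append _ _ _
    have e2 : wsum w ((s₁ ++ x :: s₂) ++ [x])
        = wsum w (s₁ ++ x :: s₂) + w gl₂ x := by
      rw [wsum_concat _ hne₁, hgetLast_eq]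
    have e3 : wsum w (s₁ ++ x :: s₂) = wsum w (s₁ ++ [x]) + wsum w (x :: s₂) :=
      wsum_append _ _ _
    have e4 : wsum w (s₁ ++ x :: s₃) = wsum w (s₁ ++ [x]) + wsum w (x :: s₃) :=
      wsum_append _ _ _
    have hwgl : w gl₂ x = wt pref M x (M gl₂) := rfl
    rw [e4] at R2
    rw [e1, e2, e3]
    linarith

theorem walk_le_all (hirr : ∀ a b, ¬ pref a b b) (hM : IsPM E M)
    (hpop : ∀ N, IsMatching E N →
      ∑ a, vote κ pref N (fun a => some (M a)) a ≤ 0) (hκ : 1 ≤ κ) :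
    ∀ (n : ℕ) (l : List A), l.length ≤ n →
      List.Chain' (fun a' a => E a (M a')) l →
      wsum (fun a' a => wt pref M a (M a')) l ≤ κ := by
  classical
  intro n
  induction n using Nat.strong_induction_on with
  | _ n ih =>
  intro l hlen hc
  by_cases hnd : l.Nodup
  · exact path_le E pref κ M hirr hM hpop hκ l hnd hc
  · obtain ⟨s₁, x, s₂, s₃, rfl⟩ := exists_dup_decomp hnd
    obtain ⟨hcA, hcB, hglue⟩ := List.isChain_append.1 hc
    obtain ⟨hcA1, hcA2, hglue1⟩ := List.isChain_append.1 hcA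
    set gl₂ : A := (x :: s₂).getLast (by simp) with hgl₂def
    have hgl₂some : (x :: s₂).getLast? = some gl₂ :=
      List.getLast?_eq_getLast (by simp)
    have hgl₂u : (s₁ ++ x :: s₂).getLast? = some gl₂ := by
      rw [getLast?_append_cons]; exact hgl₂some
    have hAdj : E x (M gl₂) := hglue gl₂ hgl₂u x rfl
    have hc' : List.Chain' (fun a' a => E a (M a')) (s₁ ++ x :: s₃) := by
      refine List.isChain_append.2 ⟨hcA1, hcB, ?_⟩
      intro p hp q hq
      have hq' : x = q := by simpa using hq
      rw [← hq']
      exact hglue1 p hp x rfl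
    have hlen' : (s₁ ++ x :: s₃).length < n := by
      simp only [List.length_append, List.length_cons] at hlen ⊢
      omega
    have R1 := closed_walk_le E pref κ M hirr hM hpop (x :: s₂).length
      (x :: s₂) x gl₂ le_rfl rfl hgl₂some hcA2 hAdj
    have R2 := ih _ hlen' (s₁ ++ x :: s₃) le_rfl hc'
    set w : A → A → ℤ := fun a' a => wt pref M a (M a') with hw
    have hne₁ : s₁ ++ x :: s₂ ≠ [] := by simp
    have hgetLast_eq : (s₁ ++ x :: s₂).getLast hne₁ = gl₂ := by
      have := List.getLast?_eq_getLast hne₁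
      rw [this] at hgl₂u
      exact Option.some.inj hgl₂u
    have e1 : wsum w ((s₁ ++ x :: s₂) ++ x :: s₃)
        = wsum w ((s₁ ++ x :: s₂) ++ [x]) + wsum w (x :: s₃) :=
      wsum_append _ _ _
    have e2 : wsum w ((s₁ ++ x :: s₂) ++ [x])
        = wsum w (s₁ ++ x :: s₂) + w gl₂ x := by
      rw [wsum_concat _ hne₁, hgetLast_eq]
    have e3 : wsum w (s₁ ++ x :: s₂) = wsum w (s₁ ++ [x]) + wsum w (x :: s₂) :=
      wsum_append _ _ _
    have e4 : wsum w (s₁ ++ x :: s₃) = wsum w (s₁ ++ [x]) + wsum w (x :: s₃) :=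
      wsum_append _ _ _
    have hwgl : w gl₂ x = wt pref M x (M gl₂) := rfl
    rw [e4] at R2
    rw [e1, e2, e3]
    linarith

theorem exists_potential (hirr : ∀ a b, ¬ pref a b b) (hM : IsPM E M)
    (hpop : ∀ N, IsMatching E N →
      ∑ a, vote κ pref N (fun a => some (M a)) a ≤ 0) (hκ : 1 ≤ κ) :
    ∃ c : A → ℤ, (∀ a, 0 ≤ c a) ∧ (∀ a, c a ≤ κ) ∧
      ∀ a' a, E a (M a') → c a' + wt pref M a (M a') ≤ c a := by
  classical
  set w : A → A → ℤ := fun a' a => wt pref M a (M a') with hw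
  set reaches : A → ℤ → Prop := fun a z =>
    ∃ u, List.Chain' (fun a' a => E a (M a')) (u ++ [a]) ∧ z = wsum w (u ++ [a])
    with hreach
  have hbdd : ∀ a z, reaches a z → z ≤ κ := by
    rintro a z ⟨u, hcu, rfl⟩
    exact walk_le_all E pref κ M hirr hM hpop hκ (u ++ [a]).length _ le_rfl hcu
  have hne : ∀ a, reaches a 0 := by
    intro a
    exact ⟨[], List.isChain_singleton _, by simp [wsum]⟩
  have hchoice : ∀ a, ∃ ub, reaches a ub ∧ ∀ z, reaches a z → z ≤ ub := by
    intro a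
    exact Int.exists_greatest_of_bdd ⟨κ, hbdd a⟩ ⟨0, hne a⟩
  choose c hc1 hc2 using hchoice
  refine ⟨c, ?_, ?_, ?_⟩
  · intro a; exact hc2 a 0 (hne a)
  · intro a; exact hbdd a (c a) (hc1 a)
  · intro a' a hE
    obtain ⟨u, hcu, hzu⟩ := hc1 a'
    have hreach2 : reaches a (c a' + w a' a) := by
      refine ⟨u ++ [a'], ?_, ?_⟩
      · refine List.isChain_append.2 ⟨hcu, by simp, ?_⟩
        intro p hp q hq
        have hp' : a' = p := by
          rw [getLast?_append_cons] at hp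
          simpa using hp
        have hq' : a = q := by simpa using hq
        rw [← hp', ← hq']
        exact hE
      · rw [wsum_concat _ (by simp : u ++ [a'] ≠ [])]
        rw [List.getLast_concat, ← hzu]
    exact hc2 a _ hreach2

end Main
end Stmt15Aux


/-- If a perfect matching `M` is popular with penalty `κ` when
compared against all (not necessarily perfect) matchings of `G`, then `M`
admits a dual certificate `α` with `α_b ≥ -κ` for every object `b`. -/
theorem stmt15 {A B : Type*} [Fintype A] [Fintype B]
    (E : A → B → Prop) (pref : A → B → B → Prop)
    (hirr : ∀ a b, ¬ pref a b b)
    (htrans : ∀ a b₁ b₂ b₃, pref a b₁ b₂ → pref a b₂ b₃ → pref a b₁ b₃)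
    (hprefE : ∀ a b b', pref a b b' → E a b ∧ E a b')
    (κ : ℤ) (hκ : 1 ≤ κ)
    (M : A → B) (hM : IsPM E M)
    (hpop : ∀ N, IsMatching E N →
      ∑ a, vote κ pref N (fun a => some (M a)) a ≤ 0) :
    ∃ (αA : A → ℤ) (αB : B → ℤ),
      (∀ a b, E a b → αA a + αB b ≥ wt pref M a b) ∧
      (∀ a, 0 ≤ αA a) ∧ (∀ b, αB b ≤ 0) ∧
      (∑ a, αA a + ∑ b, αB b = 0) ∧
      ∀ b, -κ ≤ αB b := by
  classical
  obtain ⟨c, hc0, hcκ, hfix⟩ :=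
    Stmt15Aux.exists_potential E pref κ M hirr hM hpop hκ
  set e : A ≃ B := Equiv.ofBijective M hM.1 with he
  have hMe : ∀ b, M (e.symm b) = b := fun b => e.apply_symm_apply b
  refine ⟨c, fun b => -(c (e.symm b)), ?_, hc0, ?_, ?_, ?_⟩
  · intro a b hEb
    have h1 := hfix (e.symm b) a (by rw [hMe b]; exact hEb)
    rw [hMe b] at h1
    show c a + -(c (e.symm b)) ≥ wt pref M a b
    linarith
  · intro b
    have := hc0 (e.symm b)
    simp only [neg_nonpos]
    linarith
  · have h := Equiv.sum_comp e.symm c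
    rw [Finset.sum_neg_distrib, h]
    ring
  · intro b
    have := hcκ (e.symm b)
    simp only [neg_le_neg_iff]
    linarith
end

section
/- Let G = (A ∪ B, E) be a bipartite instance with partial order preferences, ℓ : B → ℕ a level function, λ ∈ ℕ, M a perfect matching with dual certificate-like feasible solution α (α_a + α_b ≥ wt_M(a,b) on all edges, α_a + α_{M(a)} equal to the load of each matching edge), and set ℓ_α(b) = -α_b. Then every edge (a,b) ∈ M whose load α_a + α_b equals λ is λ-feasible with respect to ℓ_α: either ℓ_α(b) ≥ ℓ_α*(a) - λ + 1, or ℓ_α(b) = ℓ_α*(a) - λ and a prefers no neighbor in level ℓ_α*(a) to b, or ℓ_α(b) = ℓ_α*(a) - λ - 1 and a prefers b to all her neighbors in level ℓ_α*(a) and prefers none of her neighbors in level ℓ_α*(a) - 1 to b. -/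
open Finset

/-- Let `α` be a feasible dual solution for the perfect matching
`M` (with `α_b ≤ 0` on objects) and set `ℓ_α(b) = -α_b`.  For an agent `a`,
let `L a` be the highest level `ℓ_α*(a)` among the neighbors of `a`.  Then
every edge `(a, M a)` of `M` with load `λ = α_a + α_{M a}` is `λ`-feasible
w.r.t. `ℓ_α`: either `ℓ_α(M a) ≥ L a - λ + 1`, or `ℓ_α(M a) = L a - λ` and `a`
prefers no neighbor of level `L a` to `M a`, or `ℓ_α(M a) = L a - λ - 1`, `a`
prefers `M a` to all her neighbors of level `L a` and prefers none of her
neighbors of level `L a - 1` to `M a`. -/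
theorem stmt16 {A B : Type*} [Fintype A] [Fintype B]
    (E : A → B → Prop) (pref : A → B → B → Prop)
    (hirr : ∀ a b, ¬ pref a b b)
    (htrans : ∀ a b₁ b₂ b₃, pref a b₁ b₂ → pref a b₂ b₃ → pref a b₁ b₃)
    (hprefE : ∀ a b b', pref a b b' → E a b ∧ E a b')
    (M : A → B) (hM : IsPM E M)
    (αA : A → ℤ) (αB : B → ℤ)
    (hfeas : ∀ a b, E a b → αA a + αB b ≥ wt pref M a b)
    (hBnp : ∀ b, αB b ≤ 0)
    (hload : ∀ a, 0 ≤ αA a + αB (M a))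
    (L : A → ℤ)
    (hL : ∀ a, IsGreatest {x : ℤ | ∃ b', E a b' ∧ -αB b' = x} (L a)) :
    ∀ (a : A) (lam : ℤ), αA a + αB (M a) = lam →
      (L a - lam + 1 ≤ -αB (M a)) ∨
      (-αB (M a) = L a - lam ∧
        ∀ b', E a b' → -αB b' = L a → ¬ pref a b' (M a)) ∨
      (-αB (M a) = L a - lam - 1 ∧
        (∀ b', E a b' → -αB b' = L a → pref a (M a) b') ∧
        (∀ b', E a b' → -αB b' = L a - 1 → ¬ pref a b' (M a))) := by
  classical
  intro a lam hlam
  obtain ⟨⟨b₀, hEb₀, hb₀⟩, hub⟩ := hL a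
  by_cases h1 : L a - lam + 1 ≤ -αB (M a)
  · exact Or.inl h1
  push_neg at h1
  -- key: for every neighbor b, wt ≤ lam - αB (M a) + αB b
  have hkey : ∀ b, E a b → wt pref M a b ≤ lam + αB b - αB (M a) := by
    intro b hb
    have := hfeas a b hb
    omega
  have hwt_ge : ∀ b, (-1 : ℤ) ≤ wt pref M a b := by
    intro b
    unfold wt
    split_ifs <;> omega
  have hwt_pos : ∀ b, pref a b (M a) → wt pref M a b = 1 := by
    intro b hb
    unfold wt
    simp [hb]
  have hwt_neg : ∀ b, ¬ pref a b (M a) → ¬ pref a (M a) b → wt pref M a b = 0 := by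
    intro b h h'
    unfold wt
    simp [h, h']
  -- M a is a neighbor, so -αB (M a) ≤ L a
  have hMub : -αB (M a) ≤ L a := hub ⟨M a, hM.2 a, rfl⟩
  -- lower bound: -αB (M a) ≥ L a - lam - 1, using b₀ of level L a
  have hlow : L a - lam - 1 ≤ -αB (M a) := by
    have h1 := hkey b₀ hEb₀
    have h2 := hwt_ge b₀
    omega
  have hnoLpref : ∀ b', E a b' → -αB b' = L a → -αB (M a) ≤ L a - lam →
      ¬ pref a b' (M a) := by
    intro b' hE' hl' hle hpref
    have h1 := hkey b' hE'
    have h2 := hwt_pos b' hpref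
    omega
  rcases eq_or_lt_of_le hlow with heq | hlt
  · -- third case
    refine Or.inr (Or.inr ⟨heq.symm, ?_, ?_⟩)
    · intro b' hE' hl'
      by_contra hnp
      have hnp' : ¬ pref a b' (M a) :=
        hnoLpref b' hE' hl' (by omega)
      have h0 := hwt_neg b' hnp' hnp
      have h1 := hkey b' hE'
      omega
    · intro b' hE' hl' hpref
      have h1 := hkey b' hE'
      have h2 := hwt_pos b' hpref
      omega
  · -- second case: -αB (M a) = L a - lam
    have heq : -αB (M a) = L a - lam := by omega
    exact Or.inr (Or.inl ⟨heq, fun b' hE' hl' => hnoLpref b' hE' hl' (by omega)⟩)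
end

section
/- Let G = (A ∪ B, E) be a bipartite instance with weak rankings (preferences with transitive indifference). Then one can construct an instance Ĝ in which every agent either has strict preferences over its neighbors or is indifferent among all its neighbors, together with a bijection f from perfect matchings of G to perfect matchings of Ĝ satisfying Δ(f(N), f(M)) = Δ(N, M) for all perfect matchings M, N of G. In particular, G has an assignment of unpopularity margin ≤ k if and only if Ĝ does. -/
open Finset

namespace Stmt17Aux

variable {A B : Type}

/-- Edge relation of the constructed instance. -/
def hatE (E : A → B → Prop) (rank : A → B → ℕ) (K : ℕ) :
    (A ⊕ (A × Fin K)) → (B ⊕ (A × Fin K)) → Prop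
  | Sum.inl v, Sum.inr (w, _) => v = w
  | Sum.inr (v, i), Sum.inl b => E v b ∧ rank v b = i.val
  | Sum.inr (v, i), Sum.inr (w, j) => v = w ∧ i = j
  | Sum.inl _, Sum.inl _ => False

/-- Preferences of the constructed instance. -/
def hatPref (A B : Type) (K : ℕ) :
    (A ⊕ (A × Fin K)) → (B ⊕ (A × Fin K)) → (B ⊕ (A × Fin K)) → Prop
  | Sum.inl v, Sum.inr (w, i), Sum.inr (w', j) => w = v ∧ w' = v ∧ i < j
  | _, _, _ => False

/-- The map on matchings. -/
def hatF (rank : A → B → ℕ) (K : ℕ) (hK : ∀ a b, rank a b < K) (M : A → B) :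
    (A ⊕ (A × Fin K)) → (B ⊕ (A × Fin K))
  | Sum.inl v => Sum.inr (v, ⟨rank v (M v), hK v (M v)⟩)
  | Sum.inr (v, i) => if i.val = rank v (M v) then Sum.inl (M v) else Sum.inr (v, i)

variable {E : A → B → Prop} {rank : A → B → ℕ} {K : ℕ} {hK : ∀ a b, rank a b < K}

theorem hatF_isPM {M : A → B} (hM : IsPM E M) :
    IsPM (hatE E rank K) (hatF rank K hK M) := by
  obtain ⟨⟨hMinj, hMsurj⟩, hMe⟩ := hM
  refine ⟨⟨?_, ?_⟩, ?_⟩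
  · rintro (v | ⟨v, i⟩) (w | ⟨w, j⟩) h <;> simp only [hatF] at h
    · rcases Sum.inr.inj h with ⟨rfl, -⟩; rfl
    · split at h
      · exact absurd h (by simp)
      · rcases Sum.inr.inj h with ⟨rfl, rfl⟩; simp_all
    · split at h
      · exact absurd h (by simp)
      · rcases Sum.inr.inj h with ⟨rfl, rfl⟩; simp_all
    · split at h <;> split at h
      · rcases Sum.inl.inj h with h'
        obtain rfl := hMinj h'; simp_all [Fin.ext_iff]
      · exact absurd h (by simp)
      · exact absurd h (by simp)
      · exact congrArg Sum.inr (Sum.inr.inj h)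
  · rintro (b | ⟨v, i⟩)
    · obtain ⟨v, rfl⟩ := hMsurj b
      exact ⟨Sum.inr (v, ⟨rank v (M v), hK v (M v)⟩), by simp [hatF]⟩
    · by_cases h : i.val = rank v (M v)
      · exact ⟨Sum.inl v, by simp [hatF, Fin.ext_iff, h.symm]⟩
      · exact ⟨Sum.inr (v, i), by simp [hatF, h]⟩
  · rintro (v | ⟨v, i⟩)
    · simp [hatF, hatE]
    · by_cases h : i.val = rank v (M v)
      · simp [hatF, hatE, h, hMe v]
      · simp [hatF, hatE, h]

theorem hatF_inj {M N : A → B} (h : hatF rank K hK M = hatF rank K hK N) : M = N := by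
  funext v
  have h1 := congrFun h (Sum.inr (v, ⟨rank v (M v), hK v (M v)⟩))
  simp only [hatF, if_true] at h1
  split at h1
  · exact Sum.inl.inj h1
  · exact absurd h1 (by simp)

theorem hatF_surj {M' : (A ⊕ (A × Fin K)) → (B ⊕ (A × Fin K))}
    (hM' : IsPM (hatE E rank K) M') :
    ∃ M : A → B, IsPM E M ∧ hatF rank K hK M = M' := by
  classical
  obtain ⟨⟨hinj, hsurj⟩, he⟩ := hM'
  -- every original agent is matched to one of its dummy objects
  have step1 : ∀ v : A, ∃ i : Fin K, M' (Sum.inl v) = Sum.inr (v, i) := by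
    intro v
    have := he (Sum.inl v)
    rcases h : M' (Sum.inl v) with b | ⟨w, i⟩ <;> rw [h] at this
    · exact absurd this (by simp [hatE])
    · obtain rfl : v = w := this
      exact ⟨i, rfl⟩
  choose iv hiv using step1
  -- the corresponding class-agent is matched to a real object
  have step2 : ∀ v : A, ∃ b : B, M' (Sum.inr (v, iv v)) = Sum.inl b ∧
      E v b ∧ rank v b = (iv v).val := by
    intro v
    have := he (Sum.inr (v, iv v))
    rcases h : M' (Sum.inr (v, iv v)) with b | ⟨w, j⟩ <;> rw [h] at this
    · exact ⟨b, rfl, this⟩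
    · obtain ⟨rfl, rfl⟩ : v = w ∧ iv v = j := this
      have : Sum.inl v = Sum.inr (v, iv v) := hinj (h.trans (hiv v).symm) |>.symm
      exact absurd this (by simp)
  choose bv hbv hbe hbr using step2
  -- nobody other than inl v can be matched to the dummy object (v, i)
  have key : ∀ (v : A) (i : Fin K), i ≠ iv v → M' (Sum.inr (v, i)) = Sum.inr (v, i) := by
    intro v i hne
    obtain ⟨a'', ha''⟩ := hsurj (Sum.inr (v, i))
    rcases a'' with w | ⟨w, j⟩
    · rw [hiv w] at ha''
      simp only [Sum.inr.injEq, Prod.mk.injEq] at ha''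
      obtain ⟨rfl, h2⟩ := ha''
      exact absurd h2.symm hne
    · have := he (Sum.inr (w, j))
      rw [ha''] at this
      obtain ⟨rfl, rfl⟩ : w = v ∧ j = i := this
      exact ha''
  refine ⟨bv, ⟨⟨?_, ?_⟩, hbe⟩, ?_⟩
  · intro v w h
    have : M' (Sum.inr (v, iv v)) = M' (Sum.inr (w, iv w)) := by
      rw [hbv v, hbv w, h]
    exact (Prod.mk.injEq .. ▸ Sum.inr.inj (hinj this)).1
  · intro b
    obtain ⟨a', ha'⟩ := hsurj (Sum.inl b)
    rcases a' with v | ⟨v, i⟩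
    · rw [hiv v] at ha'; exact absurd ha' (by simp)
    · by_cases hi : i = iv v
      · subst hi
        refine ⟨v, Sum.inl.inj ((hbv v).symm.trans ha')⟩
      · rw [key v i hi] at ha'; exact absurd ha' (by simp)
  · funext a'
    rcases a' with v | ⟨v, i⟩
    · rw [hiv v]
      simp only [hatF, hbr v]
    · by_cases hi : i = iv v
      · subst hi
        simp only [hatF, hbr v, if_pos rfl]
        exact (hbv v).symm
      · have hne : i.val ≠ rank v (bv v) := by
          rw [hbr v]; exact fun h => hi (Fin.ext h)
        simp only [hatF, if_neg hne]
        exact (key v i hi).symm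

theorem hatPref_inr {p : A × Fin K} (b₁ b₂ : B ⊕ (A × Fin K)) :
    ¬ hatPref A B K (Sum.inr p) b₁ b₂ := by
  rcases b₁ with b | q <;> rcases b₂ with b' | q' <;> exact fun h => h

theorem hatPref_inl_iff (v w w' : A) (i j : Fin K) :
    hatPref A B K (Sum.inl v) (Sum.inr (w, i)) (Sum.inr (w', j)) ↔
      w = v ∧ w' = v ∧ i < j := Iff.rfl

theorem hatF_inl (M : A → B) (v : A) :
    hatF rank K hK M (Sum.inl v) = Sum.inr (v, ⟨rank v (M v), hK v (M v)⟩) := rfl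

theorem hatF_delta [Fintype A] {M N : A → B} :
    Delta (hatPref A B K) (hatF rank K hK N) (hatF rank K hK M) =
      Delta (fun a b b' => rank a b < rank a b') N M := by
  classical
  have main : ∀ P Q : A → B,
      (univ.filter fun a' => hatPref A B K a' (hatF rank K hK P a') (hatF rank K hK Q a'))
        = (univ.filter fun a => rank a (P a) < rank a (Q a)).map
            ⟨Sum.inl, Sum.inl_injective⟩ := by
    intro P Q
    ext a'
    rcases a' with v | p
    · simp [hatF_inl, hatPref_inl_iff, Fin.lt_def]
    · simp [hatPref_inr]
  simp only [Delta, main, Finset.card_map, Finset.filter_congr_decidable]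

end Stmt17Aux

theorem stmt17_aux {A B : Type} [Fintype A] [Fintype B]
    (E : A → B → Prop) (rank : A → B → ℕ) :
    ∃ (A' B' : Type) (iA : Fintype A') (_ : Fintype B')
      (E' : A' → B' → Prop) (pref' : A' → B' → B' → Prop)
      (f : (A → B) → (A' → B')),
      (∀ a' b', ¬ pref' a' b' b') ∧
      (∀ a' b₁ b₂ b₃, pref' a' b₁ b₂ → pref' a' b₂ b₃ → pref' a' b₁ b₃) ∧
      (∀ a', (∀ b₁ b₂, E' a' b₁ → E' a' b₂ → b₁ ≠ b₂ →
                pref' a' b₁ b₂ ∨ pref' a' b₂ b₁) ∨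
             (∀ b₁ b₂, ¬ pref' a' b₁ b₂)) ∧
      (∀ M, IsPM E M → IsPM E' (f M)) ∧
      (∀ M N, IsPM E M → IsPM E N → f M = f N → M = N) ∧
      (∀ M', IsPM E' M' → ∃ M, IsPM E M ∧ f M = M') ∧
      (∀ M N, IsPM E M → IsPM E N →
        @Delta A' B' iA pref' (f N) (f M) =
          Delta (fun a b b' => rank a b < rank a b') N M) ∧
      (∀ k : ℤ,
        (∃ M, IsPM E M ∧ ∀ N, IsPM E N →
            Delta (fun a b b' => rank a b < rank a b') N M ≤ k) ↔
        (∃ M', IsPM E' M' ∧ ∀ N', IsPM E' N' →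
            @Delta A' B' iA pref' N' M' ≤ k)) := by
  classical
  set K : ℕ := (Finset.univ.sup fun p : A × B => rank p.1 p.2) + 1 with hKdef
  have hK : ∀ a b, rank a b < K :=
    fun a b => Nat.lt_succ_of_le (Finset.le_sup (f := fun p : A × B => rank p.1 p.2)
      (Finset.mem_univ (a, b)))
  refine ⟨A ⊕ (A × Fin K), B ⊕ (A × Fin K), inferInstance, inferInstance,
    Stmt17Aux.hatE E rank K, Stmt17Aux.hatPref A B K, Stmt17Aux.hatF rank K hK,
    ?_, ?_, ?_, ?_, ?_, ?_, ?_, ?_⟩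
  · rintro (v | p) (b | ⟨w, i⟩) h
    · exact h
    · exact absurd h.2.2 (lt_irrefl i)
    · exact h
    · exact h
  · rintro (v | p) (b₁ | ⟨w₁, i₁⟩) (b₂ | ⟨w₂, i₂⟩) (b₃ | ⟨w₃, i₃⟩) h1 h2 <;>
      first
        | exact ⟨h1.1, h2.2.1, lt_trans h1.2.2 h2.2.2⟩
        | exact False.elim h1
        | exact False.elim h2
  · rintro (v | p)
    · left
      rintro (b₁ | ⟨w₁, i₁⟩) (b₂ | ⟨w₂, i₂⟩) h1 h2 hne
      · cases h1
      · cases h1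
      · cases h2
      · cases h1; cases h2
        have hne' : i₁ ≠ i₂ := fun h => hne (by rw [h])
        rcases lt_or_gt_of_ne hne' with h | h
        · exact Or.inl ⟨rfl, rfl, h⟩
        · exact Or.inr ⟨rfl, rfl, h⟩
    · right
      rintro (b₁ | q₁) (b₂ | q₂) h <;> cases h
  · exact fun M hM => Stmt17Aux.hatF_isPM hM
  · exact fun M N _ _ h => Stmt17Aux.hatF_inj h
  · exact fun M' hM' => Stmt17Aux.hatF_surj (hK := hK) hM'
  · exact fun M N _ _ => Stmt17Aux.hatF_delta
  · intro k
    constructor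
    · rintro ⟨M, hM, hmargin⟩
      refine ⟨Stmt17Aux.hatF rank K hK M, Stmt17Aux.hatF_isPM hM, ?_⟩
      intro N' hN'
      obtain ⟨N, hN, rfl⟩ := Stmt17Aux.hatF_surj (hK := hK) hN'
      rw [Stmt17Aux.hatF_delta]
      exact hmargin N hN
    · rintro ⟨M', hM', hmargin⟩
      obtain ⟨M, hM, rfl⟩ := Stmt17Aux.hatF_surj (hK := hK) hM'
      refine ⟨M, hM, ?_⟩
      intro N hN
      rw [← Stmt17Aux.hatF_delta (hK := hK) (M := M) (N := N)]
      exact hmargin _ (Stmt17Aux.hatF_isPM hN)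

/-- From an instance with weak rankings (given by a rank function
`rank`, where `b ≻_a b'` iff `rank a b < rank a b'`), one can construct an
instance `Ĝ` in which every agent either has strict preferences over its
neighbors or is indifferent among all of them, together with a bijection `f`
from perfect matchings of `G` to perfect matchings of `Ĝ` preserving `Δ`; in
particular `G` has an assignment of unpopularity margin `≤ k` iff `Ĝ` does. -/
theorem stmt17 {A B : Type*} [Fintype A] [Fintype B]
    (E : A → B → Prop) (rank : A → B → ℕ) :
    ∃ (A' B' : Type) (iA : Fintype A') (_ : Fintype B')
      (E' : A' → B' → Prop) (pref' : A' → B' → B' → Prop)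
      (f : (A → B) → (A' → B')),
      (∀ a' b', ¬ pref' a' b' b') ∧
      (∀ a' b₁ b₂ b₃, pref' a' b₁ b₂ → pref' a' b₂ b₃ → pref' a' b₁ b₃) ∧
      (∀ a', (∀ b₁ b₂, E' a' b₁ → E' a' b₂ → b₁ ≠ b₂ →
                pref' a' b₁ b₂ ∨ pref' a' b₂ b₁) ∨
             (∀ b₁ b₂, ¬ pref' a' b₁ b₂)) ∧
      (∀ M, IsPM E M → IsPM E' (f M)) ∧
      (∀ M N, IsPM E M → IsPM E N → f M = f N → M = N) ∧
      (∀ M', IsPM E' M' → ∃ M, IsPM E M ∧ f M = M') ∧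
      (∀ M N, IsPM E M → IsPM E N →
        @Delta A' B' iA pref' (f N) (f M) =
          Delta (fun a b b' => rank a b < rank a b') N M) ∧
      (∀ k : ℤ,
        (∃ M, IsPM E M ∧ ∀ N, IsPM E N →
            Delta (fun a b b' => rank a b < rank a b') N M ≤ k) ↔
        (∃ M', IsPM E' M' ∧ ∀ N', IsPM E' N' →
            @Delta A' B' iA pref' N' M' ≤ k)) := by
    classical
  let eA := Fintype.equivFin A
  let eB := Fintype.equivFin B
  obtain ⟨A', B', iA, iB, E', pref', f, h1, h2, h3, h4, h5, h6, h7, h8⟩ :=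
    stmt17_aux (fun v b => E (eA.symm v) (eB.symm b))
      (fun v b => rank (eA.symm v) (eB.symm b))
  have conj_pm : ∀ M : A → B, IsPM E M →
      IsPM (fun v b => E (eA.symm v) (eB.symm b)) (fun v => eB (M (eA.symm v))) := by
    intro M ⟨hbij, he⟩
    refine ⟨eB.bijective.comp (hbij.comp eA.symm.bijective), ?_⟩
    intro v; simpa using he (eA.symm v)
  have conj_pm' : ∀ M : A → B,
      IsPM (fun v b => E (eA.symm v) (eB.symm b)) (fun v => eB (M (eA.symm v))) →
      IsPM E M := by
    intro M ⟨hbij, he⟩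
    constructor
    · have : M = fun a => eB.symm ((fun v => eB (M (eA.symm v))) (eA a)) := by
        funext a; simp
      rw [this]
      exact eB.symm.bijective.comp (hbij.comp eA.bijective)
    · intro a; simpa using he (eA a)
  have conj_inj : ∀ M N : A → B,
      (fun v => eB (M (eA.symm v))) = (fun v => eB (N (eA.symm v))) → M = N := by
    intro M N h
    funext a
    have := congrFun h (eA a)
    simpa using eB.injective (by simpa using this)
  have conj_surj : ∀ M₀ : Fin (Fintype.card A) → Fin (Fintype.card B),
      ∃ M : A → B, (fun v => eB (M (eA.symm v))) = M₀ := by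
    intro M₀
    exact ⟨fun a => eB.symm (M₀ (eA a)), by funext v; simp⟩
  have filt : ∀ P : A → Prop, [DecidablePred P] →
      (univ.filter fun v => P (eA.symm v)) = (univ.filter P).map eA.toEmbedding := by
    intro P _
    ext v
    simp only [Finset.mem_filter, Finset.mem_univ, true_and, Finset.mem_map,
      Equiv.coe_toEmbedding]
    constructor
    · intro h
      exact ⟨eA.symm v, h, by simp⟩
    · rintro ⟨a, ha, rfl⟩
      simpa using ha
  have conj_delta : ∀ M N : A → B,
      Delta (fun v b b' => rank (eA.symm v) (eB.symm b) < rank (eA.symm v) (eB.symm b'))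
        (fun v => eB (N (eA.symm v))) (fun v => eB (M (eA.symm v)))
      = Delta (fun a b b' => rank a b < rank a b') N M := by
    intro M N
    simp only [Delta, Equiv.symm_apply_apply]
    rw [filt (fun a => rank a (N a) < rank a (M a)),
      filt (fun a => rank a (M a) < rank a (N a)),
      Finset.card_map, Finset.card_map]
  refine ⟨A', B', iA, iB, E', pref', fun M => f (fun v => eB (M (eA.symm v))),
    h1, h2, h3, ?_, ?_, ?_, ?_, ?_⟩
  · exact fun M hM => h4 _ (conj_pm M hM)
  · exact fun M N hM hN h =>
      conj_inj M N (h5 _ _ (conj_pm M hM) (conj_pm N hN) h)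
  · intro M' hM'
    obtain ⟨M₀, hM₀, hfM₀⟩ := h6 M' hM'
    obtain ⟨M, rfl⟩ := conj_surj M₀
    exact ⟨M, conj_pm' M hM₀, hfM₀⟩
  · exact fun M N hM hN =>
      (h7 _ _ (conj_pm M hM) (conj_pm N hN)).trans (conj_delta M N)
  · intro k
    rw [← h8 k]
    constructor
    · rintro ⟨M, hM, hm⟩
      refine ⟨fun v => eB (M (eA.symm v)), conj_pm M hM, ?_⟩
      intro N₀ hN₀
      obtain ⟨N, rfl⟩ := conj_surj N₀
      rw [conj_delta M N]
      exact hm N (conj_pm' N hN₀)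
    · rintro ⟨M₀, hM₀, hm⟩
      obtain ⟨M, rfl⟩ := conj_surj M₀
      refine ⟨M, conj_pm' M hM₀, ?_⟩
      intro N hN
      rw [← conj_delta M N]
      exact hm _ (conj_pm N hN)
end
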